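/- arXiv:1008.4747 — 8 statements merged into one kernel-verified Lean document; each statement's English description precedes it below -/
import Mathlib

section
/- Let H be the point-by-block incidence matrix over 𝔽₂ of a Steiner 2-design S(2,μ,v) (with 2 ≤ μ < v) whose replication number r = (v−1)/(μ−1) is even. Then v is odd, H·Hᵀ equals J − I over 𝔽₂ (the v×v matrix with zeros on the diagonal and ones in all off-diagonal entries), and the rank of H·Hᵀ over 𝔽₂ equals v−1. -/
open scoped Classical

open Finset

lemma rank_aux (V : Type) [Fintype V] [DecidableEq V] [Nonempty V]
    (hV : Odd (Fintype.card V)) :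
    (Matrix.of (fun p q => if p = q then (0:ZMod 2) else 1) : Matrix V V (ZMod 2)).rank
      = Fintype.card V - 1 := by
  set A : Matrix V V (ZMod 2) := Matrix.of (fun p q => if p = q then (0:ZMod 2) else 1) with hA
  have hmv : ∀ (x : V → ZMod 2) (p : V), A.mulVec x p = (∑ q, x q) - x p := by
    intro x p
    have h1 : A.mulVec x p = ∑ q, (if p = q then 0 else x q) := by
      simp [Matrix.mulVec, dotProduct, hA, ite_mul, zero_mul, one_mul]
    rw [h1]
    have h2 : ∀ q ∈ Finset.univ.erase p, (if p = q then 0 else x q) = x q := by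
      intro q hq
      rw [if_neg (Ne.symm (Finset.ne_of_mem_erase hq))]
    rw [← Finset.sum_erase (f := fun q => if p = q then (0:ZMod 2) else x q) Finset.univ
      (if_pos rfl), Finset.sum_congr rfl h2,
      Finset.sum_erase_eq_sub (Finset.mem_univ p)]
  have hker : LinearMap.ker A.mulVecLin
      = Submodule.span (ZMod 2) {(fun _ => 1 : V → ZMod 2)} := by
    ext x
    constructor
    · intro hx
      have hx0 : A.mulVec x = 0 := hx
      have hxp : ∀ p, x p = ∑ q, x q := by
        intro p
        have h := congrFun hx0 p
        rw [hmv, Pi.zero_apply, sub_eq_zero] at h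
        exact h.symm
      refine Submodule.mem_span_singleton.2 ⟨∑ q, x q, ?_⟩
      funext p
      simp [← hxp p]
    · intro hx
      obtain ⟨c, rfl⟩ := Submodule.mem_span_singleton.1 hx
      have hodd : (Fintype.card V : ZMod 2) = 1 := by
        rw [← ZMod.natCast_mod, Nat.odd_iff.1 hV, Nat.cast_one]
      have : A.mulVec (c • fun _ => (1:ZMod 2)) = 0 := by
        funext p
        rw [hmv]
        simp only [Pi.smul_apply, smul_eq_mul, mul_one, Pi.zero_apply,
          Finset.sum_const, Finset.card_univ, nsmul_eq_mul]
        rw [hodd]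
        ring
      exact this
  have hne : (fun _ => (1:ZMod 2) : V → ZMod 2) ≠ 0 := by
    intro h
    have := congrFun h (Classical.arbitrary V)
    simpa using this
  have hfk : Module.finrank (ZMod 2) (LinearMap.ker A.mulVecLin) = 1 := by
    rw [hker, finrank_span_singleton hne]
  have hrn := LinearMap.finrank_range_add_finrank_ker A.mulVecLin
  have hpi : Module.finrank (ZMod 2) (V → ZMod 2) = Fintype.card V := by
    simp [Module.finrank_pi]
  rw [hpi, hfk] at hrn
  rw [Matrix.rank]
  omega

/-- For a Steiner 2-design `S(2, μ, v)` with even replication number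
`r = (v-1)/(μ-1)`, the order `v` is odd, the product `H * Hᵀ` of the point-by-block
incidence matrix `H` over `𝔽₂` with its transpose equals `J - I` (zeros on the diagonal,
ones elsewhere), and its rank over `𝔽₂` equals `v - 1`. -/
theorem stmt_1 (μ v r : ℕ) (hμ : 2 ≤ μ)
    (V : Type) [Fintype V] [DecidableEq V] (hv : Fintype.card V = v) (hμv : μ < v)
    (𝓑 : Finset (Finset V))
    (hblocks : ∀ B ∈ 𝓑, B.card = μ)
    (hpairs : ∀ p q : V, p ≠ q → ∃! B, B ∈ 𝓑 ∧ p ∈ B ∧ q ∈ B)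
    (hr : r * (μ - 1) = v - 1) (hreven : Even r)
    (H : Matrix V {B // B ∈ 𝓑} (ZMod 2))
    (hH : ∀ p B, H p B = if p ∈ B.1 then 1 else 0) :
    Odd v ∧
      H * H.transpose = Matrix.of (fun p q => if p = q then (0 : ZMod 2) else 1) ∧
      (H * H.transpose).rank = v - 1 := by
  have hv3 : 3 ≤ v := by omega
  -- v is odd
  have hodd : Odd v := by
    obtain ⟨k, hk⟩ := hreven
    refine ⟨k * (μ - 1), ?_⟩
    have h2 : k * (μ - 1) + k * (μ - 1) = v - 1 := by
      rw [← hr, hk]; ring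
    omega
  -- replication number: each point lies in exactly r blocks
  have hrep : ∀ p : V, (𝓑.filter (fun B => p ∈ B)).card = r := by
    intro p
    have hcount : (𝓑.filter (fun B => p ∈ B)).card * (μ - 1)
        = (Finset.univ.erase p).card := by
      have hsig : ((𝓑.filter (fun B => p ∈ B)).sigma (fun B => B.erase p)).card
          = (𝓑.filter (fun B => p ∈ B)).card * (μ - 1) := by
        rw [Finset.card_sigma]
        rw [Finset.sum_congr rfl (fun B hB => ?_), Finset.sum_const, smul_eq_mul]
        rw [Finset.card_erase_of_mem (Finset.mem_filter.1 hB).2,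
          hblocks B (Finset.mem_filter.1 hB).1]
      rw [← hsig]
      refine Finset.card_bij (fun a _ => a.2) ?_ ?_ ?_
      · rintro ⟨B, q⟩ ha
        simp only [Finset.mem_sigma, Finset.mem_filter] at ha
        exact Finset.mem_erase.2 ⟨Finset.ne_of_mem_erase ha.2, Finset.mem_univ _⟩
      · rintro ⟨B₁, q₁⟩ h₁ ⟨B₂, q₂⟩ h₂ heq
        simp only at heq
        subst heq
        simp only [Finset.mem_sigma, Finset.mem_filter, Finset.mem_erase] at h₁ h₂
        obtain ⟨⟨hB₁, hp₁⟩, hq₁ne, hq₁⟩ := h₁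
        obtain ⟨⟨hB₂, hp₂⟩, hq₂ne, hq₂⟩ := h₂
        obtain ⟨B₀, _, huniq⟩ := hpairs p q₁ (Ne.symm hq₁ne)
        have e1 : B₁ = B₀ := huniq B₁ ⟨hB₁, hp₁, hq₁⟩
        have e2 : B₂ = B₀ := huniq B₂ ⟨hB₂, hp₂, hq₂⟩
        simp [e1, e2]
      · intro q hq
        have hqp : q ≠ p := (Finset.mem_erase.1 hq).1
        obtain ⟨B₀, ⟨hB₀, hp₀, hq₀⟩, _⟩ := hpairs p q (Ne.symm hqp)
        refine ⟨⟨B₀, q⟩, ?_, rfl⟩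
        simp only [Finset.mem_sigma, Finset.mem_filter, Finset.mem_erase]
        exact ⟨⟨hB₀, hp₀⟩, hqp, hq₀⟩
    rw [Finset.card_erase_of_mem (Finset.mem_univ p), Finset.card_univ, hv] at hcount
    have hμ1 : 0 < μ - 1 := by omega
    exact Nat.eq_of_mul_eq_mul_right hμ1 (hcount.trans hr.symm)
  -- matrix product
  have hprod : H * H.transpose
      = Matrix.of (fun p q => if p = q then (0 : ZMod 2) else 1) := by
    ext p q
    rw [Matrix.mul_apply]
    have hterm : ∀ B : {B // B ∈ 𝓑}, H p B * H.transpose B q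
        = if p ∈ B.1 ∧ q ∈ B.1 then (1 : ZMod 2) else 0 := by
      intro B
      rw [Matrix.transpose_apply, hH, hH, ite_and]
      by_cases h1 : p ∈ B.1 <;> by_cases h2 : q ∈ B.1 <;> simp [h1, h2]
    rw [Finset.sum_congr rfl (fun B _ => hterm B)]
    have hsum : (∑ B : {B // B ∈ 𝓑}, if p ∈ B.1 ∧ q ∈ B.1 then (1 : ZMod 2) else 0)
        = ((𝓑.filter (fun B => p ∈ B ∧ q ∈ B)).card : ZMod 2) := by
      rw [← Finset.sum_boole]
      exact Finset.sum_coe_sort 𝓑 (fun B => if p ∈ B ∧ q ∈ B then (1 : ZMod 2) else 0)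
    rw [hsum]
    by_cases hpq : p = q
    · subst hpq
      have : 𝓑.filter (fun B => p ∈ B ∧ p ∈ B) = 𝓑.filter (fun B => p ∈ B) := by
        simp
      rw [this, hrep p]
      have hr0 : ((r : ℕ) : ZMod 2) = 0 := by
        rw [← ZMod.natCast_mod, Nat.even_iff.1 hreven, Nat.cast_zero]
      rw [hr0]
      simp
    · obtain ⟨B₀, ⟨hB₀, hp₀, hq₀⟩, huniq⟩ := hpairs p q hpq
      have hfilt : 𝓑.filter (fun B => p ∈ B ∧ q ∈ B) = {B₀} := by
        ext B
        simp only [Finset.mem_filter, Finset.mem_singleton]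
        constructor
        · rintro ⟨hB, hp, hq⟩; exact huniq B ⟨hB, hp, hq⟩
        · rintro rfl; exact ⟨hB₀, hp₀, hq₀⟩
      rw [hfilt]
      simp [Matrix.of_apply, hpq]
  refine ⟨hodd, hprod, ?_⟩
  rw [hprod]
  haveI : Nonempty V := by
    rw [← Fintype.card_pos_iff, hv]; omega
  rw [rank_aux V (by rwa [hv]), hv]
end

section
/- Let (V,𝓑) be a Steiner 2-design S(2,μ,v) with odd replication number r = (v−1)/(μ−1), and suppose (V,𝓑) contains j point-wise mutually disjoint subdesigns (V₁,𝓑₁),…,(Vⱼ,𝓑ⱼ) such that V₁ ∪ ⋯ ∪ Vⱼ is a proper subset of V and each subdesign has odd replication number (|Vᵢ|−1)/(μ−1). Let H' be the point-by-block incidence matrix over 𝔽₂ of (V, 𝓑 \ (𝓑₁ ∪ ⋯ ∪ 𝓑ⱼ)). Then the rank of H'·H'ᵀ over 𝔽₂ equals j+1. -/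
open scoped Classical

lemma count_through {V : Type} [DecidableEq V] (μ : ℕ)
    (W : Finset V) (𝓒 : Finset (Finset V))
    (hb : ∀ B ∈ 𝓒, B.card = μ)
    (hsub : ∀ B ∈ 𝓒, B ⊆ W)
    (hp : ∀ p ∈ W, ∀ q ∈ W, p ≠ q → ∃! B, B ∈ 𝓒 ∧ p ∈ B ∧ q ∈ B)
    {p : V} (hpW : p ∈ W) :
    (𝓒.filter (fun B => p ∈ B)).card * (μ - 1) = W.card - 1 := by
  classical
  have key : W.erase p = (𝓒.filter (fun B => p ∈ B)).biUnion (fun B => B.erase p) := by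
    ext q
    simp only [Finset.mem_erase, Finset.mem_biUnion, Finset.mem_filter]
    constructor
    · rintro ⟨hqp, hqW⟩
      obtain ⟨B, ⟨hB, hpB, hqB⟩, -⟩ := hp p hpW q hqW (Ne.symm hqp)
      exact ⟨B, ⟨hB, hpB⟩, hqp, hqB⟩
    · rintro ⟨B, ⟨hB, hpB⟩, hqp, hqB⟩
      exact ⟨hqp, hsub B hB hqB⟩
  have hdisj : ∀ B₁ ∈ 𝓒.filter (fun B => p ∈ B), ∀ B₂ ∈ 𝓒.filter (fun B => p ∈ B),
      B₁ ≠ B₂ → Disjoint (B₁.erase p) (B₂.erase p) := by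
    intro B₁ h₁ B₂ h₂ hne
    rw [Finset.mem_filter] at h₁ h₂
    rw [Finset.disjoint_left]
    intro q hq₁ hq₂
    rw [Finset.mem_erase] at hq₁ hq₂
    obtain ⟨B, -, huniq⟩ := hp p hpW q (hsub B₁ h₁.1 hq₁.2) (Ne.symm hq₁.1)
    exact hne ((huniq B₁ ⟨h₁.1, h₁.2, hq₁.2⟩).trans (huniq B₂ ⟨h₂.1, h₂.2, hq₂.2⟩).symm)
  have hcard : (W.erase p).card = (𝓒.filter (fun B => p ∈ B)).card * (μ - 1) := by
    rw [key, Finset.card_biUnion hdisj]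
    rw [Finset.sum_congr rfl (fun B hB => ?_), Finset.sum_const, smul_eq_mul]
    rw [Finset.mem_filter] at hB
    rw [Finset.card_erase_of_mem hB.2, hb B hB.1]
  rw [← hcard, Finset.card_erase_of_mem hpW]

lemma Kinv (j : ℕ) :
    (Matrix.of fun a b : Fin (j+1) =>
        if a = 0 then (if b = 0 then (j : ZMod 2) + 1 else 1)
        else if b = 0 ∨ b = a then 1 else 0) *
      (Matrix.of fun a b : Fin (j+1) => if a = b ∧ a ≠ 0 then (0 : ZMod 2) else 1) = 1 := by
  have h2 : (2 : ZMod 2) = 0 := by decide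
  ext a c
  rw [Matrix.mul_apply]
  simp only [Matrix.of_apply]
  have hM : ∀ b : Fin (j+1), (if b = c ∧ b ≠ 0 then (0 : ZMod 2) else 1)
      = 1 + (if b = c then 1 else 0) + (if b = 0 then 1 else 0) * (if c = 0 then 1 else 0) := by
    intro b
    by_cases hbc : b = c <;> by_cases hb0 : b = 0 <;> by_cases hc0 : c = 0 <;>
      simp_all <;> decide
  have hterm : ∀ b : Fin (j+1),
      (if a = 0 then (if b = 0 then (j : ZMod 2) + 1 else 1)
        else if b = 0 ∨ b = a then 1 else 0) *
      (if b = c ∧ b ≠ 0 then (0 : ZMod 2) else 1)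
      = (if a = 0 then (if b = 0 then (j : ZMod 2) + 1 else 1)
          else if b = 0 ∨ b = a then 1 else 0)
        + ((if b = c then (if a = 0 then (if b = 0 then (j : ZMod 2) + 1 else 1)
              else if b = 0 ∨ b = a then 1 else 0) else 0) +
          (if b = 0 then (if a = 0 then (if b = 0 then (j : ZMod 2) + 1 else 1)
              else if b = 0 ∨ b = a then 1 else 0) else 0) * (if c = 0 then 1 else 0)) := by
    intro b
    rw [hM b]
    split_ifs <;> ring
  rw [Finset.sum_congr rfl (fun b _ => hterm b), Finset.sum_add_distrib,
    Finset.sum_add_distrib, ← Finset.sum_mul, Finset.sum_ite_eq', Finset.sum_ite_eq']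
  simp only [Finset.mem_univ, if_true]
  have hrowsum : (∑ b : Fin (j+1), if a = 0 then (if b = 0 then (j : ZMod 2) + 1 else 1)
      else if b = 0 ∨ b = a then 1 else 0) = if a = 0 then 1 else 0 := by
    by_cases ha : a = 0
    · simp only [if_pos ha]
      have : ∀ b : Fin (j+1), (if b = 0 then (j : ZMod 2) + 1 else 1)
          = (if b = 0 then (j : ZMod 2) else 0) + 1 := by
        intro b; split_ifs <;> ring
      rw [Finset.sum_congr rfl (fun b _ => this b), Finset.sum_add_distrib,
        Finset.sum_ite_eq', Finset.sum_const, Finset.card_univ, Fintype.card_fin,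
        nsmul_eq_mul, mul_one]
      simp only [Finset.mem_univ, if_true]
      push_cast
      linear_combination (j : ZMod 2) * h2
    · simp only [if_neg ha]
      have : ∀ b : Fin (j+1), (if b = 0 ∨ b = a then (1 : ZMod 2) else 0)
          = (if b = 0 then 1 else 0) + (if b = a then 1 else 0) := by
        intro b; by_cases hb0 : b = 0 <;> by_cases hba : b = a <;> simp_all
      rw [Finset.sum_congr rfl (fun b _ => this b), Finset.sum_add_distrib,
        Finset.sum_ite_eq', Finset.sum_ite_eq']
      simp only [Finset.mem_univ, if_true]
      exact h2
  rw [hrowsum]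
  by_cases ha : a = 0 <;> by_cases hc : c = 0 <;> by_cases hca : c = a <;>
    simp only [ha, hc, hca, Matrix.one_apply, if_true, if_false, true_or, false_or,
      or_true, or_false, eq_self_iff_true] <;>
    first
      | (rw [if_neg (fun h : (0 : Fin (j+1)) = c => hc h.symm)]; linear_combination h2)
      | (rw [if_neg (fun h : a = c => hca h.symm)]; ring)
      | linear_combination ((j : ZMod 2) + 1) * h2
      | linear_combination h2
      | ring

lemma odd_cast {n : ℕ} (h : Odd n) : ((n : ℕ) : ZMod 2) = 1 := by
  obtain ⟨m, rfl⟩ := h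
  have h2 : (2 : ZMod 2) = 0 := by decide
  push_cast
  linear_combination (m : ZMod 2) * h2

lemma even_cast {n : ℕ} (h : Even n) : ((n : ℕ) : ZMod 2) = 0 := by
  obtain ⟨m, rfl⟩ := h
  have h2 : (2 : ZMod 2) = 0 := by decide
  push_cast
  linear_combination (m : ZMod 2) * h2

set_option maxHeartbeats 1000000 in
/-- Deleting `j` point-wise mutually disjoint subdesigns with odd
replication numbers (whose point sets do not cover all of `V`) from a Steiner 2-design
`S(2, μ, v)` with odd replication number yields an incidence matrix `H'` with
`rank(H' * H'ᵀ) = j + 1` over `𝔽₂`. -/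
theorem stmt_2 (μ v r j : ℕ) (hμ : 2 ≤ μ)
    (V : Type) [Fintype V] [DecidableEq V] (hv : Fintype.card V = v)
    (𝓑 : Finset (Finset V))
    (hblocks : ∀ B ∈ 𝓑, B.card = μ)
    (hpairs : ∀ p q : V, p ≠ q → ∃! B, B ∈ 𝓑 ∧ p ∈ B ∧ q ∈ B)
    (hr : r * (μ - 1) = v - 1) (hrodd : Odd r)
    (Vs : Fin j → Finset V) (Bs : Fin j → Finset (Finset V))
    (hVs : ∀ i, Vs i ⊂ Finset.univ)
    (hBs : ∀ i, Bs i ⊂ 𝓑)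
    (hsubblocks : ∀ i, ∀ B ∈ Bs i, B ⊆ Vs i)
    (hsubpairs : ∀ i, ∀ p ∈ Vs i, ∀ q ∈ Vs i, p ≠ q → ∃! B, B ∈ Bs i ∧ p ∈ B ∧ q ∈ B)
    (hdisj : ∀ i i', i ≠ i' → Disjoint (Vs i) (Vs i'))
    (hunion : Finset.univ.biUnion Vs ⊂ Finset.univ)
    (rs : Fin j → ℕ) (hrs : ∀ i, rs i * (μ - 1) = (Vs i).card - 1)
    (hrsodd : ∀ i, Odd (rs i))
    (H' : Matrix V {B // B ∈ 𝓑 \ Finset.univ.biUnion Bs} (ZMod 2))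
    (hH' : ∀ p B, H' p B = if p ∈ B.1 then 1 else 0) :
    (H' * H'.transpose).rank = j + 1 := by
  have hμ1 : 0 < μ - 1 := by omega
  have hBsub : ∀ i, Bs i ⊆ 𝓑 := fun i => (hBs i).subset
  have hmem_unique : ∀ {i i' : Fin j} {p : V}, p ∈ Vs i → p ∈ Vs i' → i = i' := by
    intro i i' p h h'
    by_contra hne
    exact Finset.disjoint_left.mp (hdisj i i' hne) h h'
  have hcnt : ∀ p : V, (𝓑.filter (fun B => p ∈ B)).card = r := by
    intro p
    have h := count_through μ Finset.univ 𝓑 hblocks (fun B _ => B.subset_univ)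
      (fun p _ q _ hpq => hpairs p q hpq) (Finset.mem_univ p)
    rw [Finset.card_univ, hv, ← hr] at h
    exact Nat.eq_of_mul_eq_mul_right hμ1 h
  have hcnti : ∀ i, ∀ p ∈ Vs i, ((Bs i).filter (fun B => p ∈ B)).card = rs i := by
    intro i p hp
    have h := count_through μ (Vs i) (Bs i) (fun B hB => hblocks B (hBsub i hB))
      (hsubblocks i) (hsubpairs i) hp
    rw [← hrs i] at h
    exact Nat.eq_of_mul_eq_mul_right hμ1 h
  -- the entry formula
  have hM : ∀ p q : V, (H' * H'.transpose) p q
      = if (∃ i, p ∈ Vs i ∧ q ∈ Vs i) then 0 else 1 := by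
    intro p q
    have step1 : (H' * H'.transpose) p q
        = (((𝓑 \ Finset.univ.biUnion Bs).filter (fun B => p ∈ B ∧ q ∈ B)).card : ZMod 2) := by
      rw [Matrix.mul_apply]
      have : ∀ B : {B // B ∈ 𝓑 \ Finset.univ.biUnion Bs},
          H' p B * H'.transpose B q = if p ∈ B.1 ∧ q ∈ B.1 then (1 : ZMod 2) else 0 := by
        intro B
        rw [Matrix.transpose_apply, hH', hH']
        by_cases h1 : p ∈ B.1 <;> by_cases h2 : q ∈ B.1 <;> simp [h1, h2]
      rw [Finset.sum_congr rfl (fun B _ => this B)]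
      rw [Finset.sum_coe_sort (𝓑 \ Finset.univ.biUnion Bs)
        (fun B => if p ∈ B ∧ q ∈ B then (1 : ZMod 2) else 0)]
      rw [Finset.sum_boole]
    rw [step1]
    by_cases hpq : p = q
    · subst hpq
      have hfe : (𝓑 \ Finset.univ.biUnion Bs).filter (fun B => p ∈ B ∧ p ∈ B)
          = (𝓑 \ Finset.univ.biUnion Bs).filter (fun B => p ∈ B) := by
        apply Finset.filter_congr
        intro B _
        simp [and_self]
      rw [hfe]
      by_cases hp : ∃ i, p ∈ Vs i
      · obtain ⟨i, hpi⟩ := hp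
        rw [if_pos ⟨i, hpi, hpi⟩]
        have hres : (𝓑 \ Finset.univ.biUnion Bs).filter (fun B => p ∈ B)
            = (𝓑.filter (fun B => p ∈ B)) \ ((Bs i).filter (fun B => p ∈ B)) := by
          ext B
          simp only [Finset.mem_filter, Finset.mem_sdiff, Finset.mem_biUnion,
            Finset.mem_univ, true_and]
          constructor
          · rintro ⟨⟨hB𝓑, hBnot⟩, hpB⟩
            exact ⟨⟨hB𝓑, hpB⟩, fun h => hBnot ⟨i, h.1⟩⟩
          · rintro ⟨⟨hB𝓑, hpB⟩, hBnot⟩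
            refine ⟨⟨hB𝓑, fun h => ?_⟩, hpB⟩
            obtain ⟨i', hBi'⟩ := h
            have : p ∈ Vs i' := hsubblocks i' B hBi' hpB
            have : i' = i := hmem_unique this hpi
            exact hBnot ⟨this ▸ hBi', hpB⟩
        rw [hres, Finset.card_sdiff_of_subset (Finset.filter_subset_filter _ (hBsub i)),
          hcnt p, hcnti i p hpi]
        exact even_cast (Nat.Odd.sub_odd hrodd (hrsodd i))
      · rw [if_neg (fun ⟨i, h, _⟩ => hp ⟨i, h⟩)]
        have hres : (𝓑 \ Finset.univ.biUnion Bs).filter (fun B => p ∈ B)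
            = 𝓑.filter (fun B => p ∈ B) := by
          ext B
          simp only [Finset.mem_filter, Finset.mem_sdiff, Finset.mem_biUnion,
            Finset.mem_univ, true_and]
          constructor
          · rintro ⟨⟨hB𝓑, -⟩, hpB⟩; exact ⟨hB𝓑, hpB⟩
          · rintro ⟨hB𝓑, hpB⟩
            refine ⟨⟨hB𝓑, fun ⟨i', hBi'⟩ => hp ⟨i', hsubblocks i' B hBi' hpB⟩⟩, hpB⟩
        rw [hres, hcnt p]
        exact odd_cast hrodd
    · by_cases hex : ∃ i, p ∈ Vs i ∧ q ∈ Vs i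
      · rw [if_pos hex]
        obtain ⟨i, hpi, hqi⟩ := hex
        obtain ⟨B₁, ⟨hB₁, hpB₁, hqB₁⟩, -⟩ := hsubpairs i p hpi q hqi hpq
        have hempty : (𝓑 \ Finset.univ.biUnion Bs).filter (fun B => p ∈ B ∧ q ∈ B) = ∅ := by
          rw [Finset.eq_empty_iff_forall_notMem]
          intro B hB
          rw [Finset.mem_filter, Finset.mem_sdiff] at hB
          obtain ⟨⟨hB𝓑, hBnot⟩, hpB, hqB⟩ := hB
          obtain ⟨B₀, -, huniq⟩ := hpairs p q hpq
          have e1 : B = B₀ := huniq B ⟨hB𝓑, hpB, hqB⟩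
          have e2 : B₁ = B₀ := huniq B₁ ⟨hBsub i hB₁, hpB₁, hqB₁⟩
          exact hBnot (Finset.mem_biUnion.mpr ⟨i, Finset.mem_univ i, (e1.trans e2.symm) ▸ hB₁⟩)
        rw [hempty]
        simp
      · rw [if_neg hex]
        obtain ⟨B₀, ⟨hB₀, hpB₀, hqB₀⟩, huniq⟩ := hpairs p q hpq
        have hsingle : (𝓑 \ Finset.univ.biUnion Bs).filter (fun B => p ∈ B ∧ q ∈ B)
            = {B₀} := by
          ext B
          simp only [Finset.mem_filter, Finset.mem_sdiff, Finset.mem_biUnion,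
            Finset.mem_univ, true_and, Finset.mem_singleton]
          constructor
          · rintro ⟨⟨hB𝓑, -⟩, hpB, hqB⟩
            exact huniq B ⟨hB𝓑, hpB, hqB⟩
          · rintro rfl
            exact ⟨⟨hB₀, fun ⟨i, hBi⟩ => hex ⟨i, hsubblocks i _ hBi hpB₀,
              hsubblocks i _ hBi hqB₀⟩⟩, hpB₀, hqB₀⟩
        rw [hsingle]
        simp
  -- upper bound
  have hupper : (H' * H'.transpose).rank ≤ j + 1 := by
    set NN : Matrix V (Fin (j+1)) (ZMod 2) :=
      Matrix.of (fun (p : V) (k : Fin (j+1)) =>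
        Fin.cases (1 : ZMod 2) (fun i => if p ∈ Vs i then 1 else 0) k) with hNN
    have hfac : H' * H'.transpose = NN * NN.transpose := by
      ext p q
      rw [hM p q, Matrix.mul_apply, Fin.sum_univ_succ]
      simp only [hNN, Matrix.of_apply, Matrix.transpose_apply, Fin.cases_zero, Fin.cases_succ,
        one_mul]
      by_cases hex : ∃ i, p ∈ Vs i ∧ q ∈ Vs i
      · obtain ⟨i₀, hp₀, hq₀⟩ := hex
        have hsum : ∑ i : Fin j, (if p ∈ Vs i then (1 : ZMod 2) else 0) *
            (if q ∈ Vs i then 1 else 0) = 1 := by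
          rw [Finset.sum_eq_single i₀]
          · rw [if_pos hp₀, if_pos hq₀, one_mul]
          · intro i _ hne
            by_cases hpi : p ∈ Vs i
            · exact absurd (hmem_unique hpi hp₀) hne
            · rw [if_neg hpi, zero_mul]
          · intro h; exact absurd (Finset.mem_univ i₀) h
        rw [hsum, if_pos ⟨i₀, hp₀, hq₀⟩]
        decide
      · have hsum : ∑ i : Fin j, (if p ∈ Vs i then (1 : ZMod 2) else 0) *
            (if q ∈ Vs i then 1 else 0) = 0 := by
          apply Finset.sum_eq_zero
          intro i _
          by_cases hpi : p ∈ Vs i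
          · by_cases hqi : q ∈ Vs i
            · exact absurd ⟨i, hpi, hqi⟩ hex
            · rw [if_neg hqi, mul_zero]
          · rw [if_neg hpi, zero_mul]
        rw [hsum, if_neg hex, add_zero]
    calc (H' * H'.transpose).rank ≤ NN.rank := by
          rw [hfac]; exact Matrix.rank_mul_le_left _ _
      _ ≤ Fintype.card (Fin (j+1)) := Matrix.rank_le_card_width _
      _ = j + 1 := Fintype.card_fin _
  -- lower bound
  obtain ⟨p₀, -, hp₀mem⟩ := Finset.exists_of_ssubset hunion
  have hp₀ : ∀ i, p₀ ∉ Vs i :=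
    fun i h => hp₀mem (Finset.mem_biUnion.mpr ⟨i, Finset.mem_univ i, h⟩)
  have hVne : ∀ i, (Vs i).Nonempty := by
    intro i
    obtain ⟨m, hm⟩ := hrsodd i
    have h1 : 1 ≤ rs i * (μ - 1) := Nat.one_le_iff_ne_zero.mpr
      (Nat.mul_ne_zero (by omega) (by omega))
    rw [hrs i] at h1
    exact Finset.card_pos.mp (by omega)
  choose pi hpi using hVne
  set f : Fin (j+1) → V := Fin.cases p₀ pi with hfdef
  have hf0 : f 0 = p₀ := rfl
  have hfs : ∀ i : Fin j, f i.succ = pi i := fun i => rfl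
  have hf : ∀ a b : Fin (j+1), (∃ i, f a ∈ Vs i ∧ f b ∈ Vs i) ↔ (a = b ∧ a ≠ 0) := by
    intro a b
    constructor
    · rintro ⟨i, hai, hbi⟩
      obtain rfl | ⟨ia, rfl⟩ := Fin.eq_zero_or_eq_succ a
      · exact absurd (hf0 ▸ hai) (hp₀ i)
      obtain rfl | ⟨ib, rfl⟩ := Fin.eq_zero_or_eq_succ b
      · exact absurd (hf0 ▸ hbi) (hp₀ i)
      have hai' : pi ia ∈ Vs i := by rw [← hfs ia]; exact hai
      have hbi' : pi ib ∈ Vs i := by rw [← hfs ib]; exact hbi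
      have e1 : i = ia := hmem_unique hai' (hpi ia)
      have e2 : i = ib := hmem_unique hbi' (hpi ib)
      exact ⟨congrArg Fin.succ (e1.symm.trans e2), Fin.succ_ne_zero ia⟩
    · rintro ⟨rfl, ha0⟩
      obtain rfl | ⟨ia, rfl⟩ := Fin.eq_zero_or_eq_succ a
      · exact absurd rfl ha0
      · exact ⟨ia, hfs ia ▸ hpi ia, hfs ia ▸ hpi ia⟩
  have hlower : j + 1 ≤ (H' * H'.transpose).rank := by
    set Sel : Matrix (Fin (j+1)) V (ZMod 2) :=
      Matrix.of fun a p => if p = f a then 1 else 0 with hSeldef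
    have hSel : Sel * (H' * H'.transpose) * Sel.transpose
        = Matrix.of (fun a b : Fin (j+1) => if a = b ∧ a ≠ 0 then (0 : ZMod 2) else 1) := by
      ext a b
      rw [Matrix.mul_assoc, Matrix.mul_apply]
      have inner : ∀ p : V, ((H' * H'.transpose) * Sel.transpose) p b
          = (H' * H'.transpose) p (f b) := by
        intro p
        rw [Matrix.mul_apply]
        have : ∀ q : V, (H' * H'.transpose) p q * Sel.transpose q b
            = if q = f b then (H' * H'.transpose) p q else 0 := by
          intro q
          rw [Matrix.transpose_apply, hSeldef]
          simp only [Matrix.of_apply]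
          split_ifs <;> ring
        rw [Finset.sum_congr rfl (fun q _ => this q), Finset.sum_ite_eq']
        simp
      have houter : ∀ p : V, Sel a p * ((H' * H'.transpose) * Sel.transpose) p b
          = if p = f a then ((H' * H'.transpose) * Sel.transpose) p b else 0 := by
        intro p
        rw [hSeldef]
        simp only [Matrix.of_apply]
        split_ifs <;> ring
      rw [Finset.sum_congr rfl (fun p _ => houter p), Finset.sum_ite_eq']
      simp only [Finset.mem_univ, if_true]
      rw [inner (f a), hM]
      simp only [Matrix.of_apply]
      simp only [hf a b]
    have hone : (Matrix.of fun a b : Fin (j+1) =>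
          if a = 0 then (if b = 0 then (j : ZMod 2) + 1 else 1)
          else if b = 0 ∨ b = a then 1 else 0) *
        (Sel * (H' * H'.transpose) * Sel.transpose) = 1 := by
      rw [hSel]; exact Kinv j
    calc j + 1 = (1 : Matrix (Fin (j+1)) (Fin (j+1)) (ZMod 2)).rank := by
          rw [Matrix.rank_one, Fintype.card_fin]
      _ = ((Matrix.of fun a b : Fin (j+1) =>
            if a = 0 then (if b = 0 then (j : ZMod 2) + 1 else 1)
            else if b = 0 ∨ b = a then 1 else 0) *
          (Sel * (H' * H'.transpose) * Sel.transpose)).rank := by rw [hone]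
      _ ≤ (Sel * (H' * H'.transpose) * Sel.transpose).rank := Matrix.rank_mul_le_right _ _
      _ ≤ (Sel * (H' * H'.transpose)).rank := Matrix.rank_mul_le_left _ _
      _ ≤ (H' * H'.transpose).rank := Matrix.rank_mul_le_right _ _
  have h := le_antisymm hupper hlower
  convert h <;> try exact Subsingleton.elim _ _
end

section
/- Let (V,𝓑) be a Steiner 2-design S(2,μ,v) with odd replication number r = (v−1)/(μ−1), and suppose (V,𝓑) contains j point-wise mutually disjoint subdesigns (V₁,𝓑₁),…,(Vⱼ,𝓑ⱼ) with V₁ ∪ ⋯ ∪ Vⱼ ⊆ V, each having even replication number (|Vᵢ|−1)/(μ−1). Let H' be the point-by-block incidence matrix over 𝔽₂ of (V, 𝓑 \ (𝓑₁ ∪ ⋯ ∪ 𝓑ⱼ)). Then the rank of H'·H'ᵀ over 𝔽₂ equals (|V₁|−1) + (|V₂|−1) + ⋯ + (|Vⱼ|−1) + 1. -/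
/-!
Over `𝔽₂` the entry `(p, q)` of `H' H'ᵀ` is the parity of the number of surviving blocks through
`p` and `q`. On the diagonal this is `r` minus an even number of removed blocks, hence `1`; off
the diagonal it is `0` exactly when `p` and `q` lie in a common `Vᵢ`, whose block through them
was removed. So `H' H'ᵀ = J + G + I`, where `G` is the indicator of lying in the same class of
the partition of `V` into the nonempty `Vᵢ` and singletons, and every class has odd size (`rᵢ`
is even). A vector is then in the kernel iff it is constant on classes with total sum `0`, so
the rank is `v - #classes + 1 = ∑ (|Vᵢ| - 1) + 1`.
-/

open scoped Classical

open Finset Function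
open scoped Matrix

section FiberMatrix

variable {V T : Type*} [Fintype V] [DecidableEq T]

lemma sum_fiber_comp_of_odd_card {g : V → T} {t : T} (ht : Odd #{p | g p = t})
    (y : T → ZMod 2) : ∑ p with g p = t, y (g p) = y t := by
  rw [sum_congr rfl fun p hp => by rw [(mem_filter.mp hp).2], sum_const, nsmul_eq_mul,
    (ZMod.natCast_eq_one_iff_odd).mpr ht, one_mul]

lemma sum_comp_eq_sum_of_odd_card_fiber [Fintype T] {g : V → T} (hg : ∀ t, Odd #{p | g p = t})
    (y : T → ZMod 2) : ∑ p, y (g p) = ∑ t, y t := by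
  rw [← sum_fiberwise univ g]
  exact sum_congr rfl fun t _ => sum_fiber_comp_of_odd_card (hg t) y

variable [DecidableEq V]

def fiberMatrix (g : V → T) : Matrix V V (ZMod 2) :=
  Matrix.of fun p q => if p ≠ q ∧ g p = g q then 0 else 1

lemma fiberMatrix_mulVec_apply (g : V → T) (x : V → ZMod 2) (p : V) :
    (fiberMatrix g *ᵥ x) p = ∑ q, x q + ∑ q with g q = g p, x q + x p := by
  have entry (q : V) : fiberMatrix g p q
      = 1 + (if g q = g p then 1 else 0) + (if p = q then 1 else 0) := by
    rw [fiberMatrix, Matrix.of_apply]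
    by_cases hpq : p = q
    · subst hpq
      simp only [ne_eq, not_true_eq_false, false_and, ↓reduceIte]
      decide
    · by_cases hg : g q = g p
      · simp only [ne_eq, hpq, not_false_eq_true, hg, and_self, ↓reduceIte, add_zero]
        decide
      · simp only [ne_eq, hpq, not_false_eq_true, Ne.symm hg, and_false, ↓reduceIte, hg,
          add_zero]
  simp only [Matrix.mulVec, dotProduct, entry, add_mul, one_mul, ite_mul, zero_mul,
    sum_add_distrib, sum_ite_eq, sum_filter, if_pos (mem_univ _)]

variable [Fintype T] {g : V → T} (hg : ∀ t, Odd #{p | g p = t})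
include hg

lemma fiberMatrix_mulVec_eq_zero_iff {x : V → ZMod 2} :
    fiberMatrix g *ᵥ x = 0 ↔ ∃ y : T → ZMod 2, ∑ t, y t = 0 ∧ y ∘ g = x := by
  have mulVec_comp (y : T → ZMod 2) (p : V) : (fiberMatrix g *ᵥ (y ∘ g)) p = ∑ t, y t := by
    simp only [fiberMatrix_mulVec_apply, Function.comp_apply]
    rw [sum_fiber_comp_of_odd_card (hg _),
      sum_comp_eq_sum_of_odd_card_fiber hg, add_assoc, CharTwo.add_self_eq_zero, add_zero]
  constructor
  · intro hx
    -- Row `p` says `x p = ∑ x + ∑ x over the fibre of p`, which depends only on `g p`.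
    set y : T → ZMod 2 := fun t => ∑ q, x q + ∑ q with g q = t, x q
    have hyx : y ∘ g = x := funext fun p =>
      CharTwo.add_eq_zero.mp <| (fiberMatrix_mulVec_apply g x p).symm.trans (congrFun hx p)
    refine ⟨y, ?_, hyx⟩
    obtain _ | ⟨⟨p⟩⟩ := isEmpty_or_nonempty V
    · rw [← sum_comp_eq_sum_of_odd_card_fiber hg, univ_eq_empty, sum_empty]
    · rw [← mulVec_comp y p, hyx, hx, Pi.zero_apply]
  · rintro ⟨y, hy, rfl⟩
    funext p
    rw [mulVec_comp, hy, Pi.zero_apply]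

lemma ker_fiberMatrix_mulVecLin :
    LinearMap.ker (fiberMatrix g).mulVecLin =
      (LinearMap.ker (∑ t, LinearMap.proj t : (T → ZMod 2) →ₗ[ZMod 2] ZMod 2)).map
        (LinearMap.funLeft (ZMod 2) (ZMod 2) g) := by
  ext x
  simp only [LinearMap.mem_ker, Matrix.mulVecLin_apply, fiberMatrix_mulVec_eq_zero_iff hg,
    Submodule.mem_map, LinearMap.coe_sum, LinearMap.coe_proj, Finset.sum_apply, Function.eval]
  rfl

lemma rank_fiberMatrix_add_card [Nonempty V] :
    (fiberMatrix g).rank + Nat.card T = Nat.card V + 1 := by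
  have hsurj : Function.Surjective g := fun t =>
    let ⟨p, hp⟩ := card_pos.mp (hg t).pos
    ⟨p, (mem_filter.mp hp).2⟩
  set ℓ : Module.Dual (ZMod 2) (T → ZMod 2) := ∑ t, LinearMap.proj t
  have hℓ : ℓ ≠ 0 := fun h => by
    have := LinearMap.congr_fun h (Pi.single (g (Classical.arbitrary V)) 1)
    simp [ℓ] at this
  have hker : Module.finrank (ZMod 2) (LinearMap.ker (fiberMatrix g).mulVecLin) =
      Module.finrank (ZMod 2) (LinearMap.ker ℓ) := by
    rw [ker_fiberMatrix_mulVecLin hg]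
    exact (Submodule.equivMapOfInjective _
      (LinearMap.funLeft_injective_of_surjective _ _ _ hsurj) _).symm.finrank_eq
  have hrank_nullity := LinearMap.finrank_range_add_finrank_ker (fiberMatrix g).mulVecLin
  have hℓ_ker := Module.Dual.finrank_ker_add_one_of_ne_zero hℓ
  rw [Module.finrank_fintype_fun_eq_card] at hrank_nullity hℓ_ker
  rw [Matrix.rank, Nat.card_eq_fintype_card, Nat.card_eq_fintype_card]
  omega

end FiberMatrix

section PartQuotient

variable {V ι : Type*} (S : ι → Finset V)

abbrev PartQuotient := {p : V // ∀ i, p ∉ S i} ⊕ {i : ι // (S i).Nonempty}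

noncomputable def PartQuotient.mk (p : V) : PartQuotient S :=
  if h : ∃ i, p ∈ S i then .inr ⟨h.choose, p, h.choose_spec⟩ else .inl ⟨p, not_exists.mp h⟩

variable {S}

lemma PartQuotient.mk_eq_inl_iff {p : V} {a : {p : V // ∀ i, p ∉ S i}} :
    PartQuotient.mk S p = .inl a ↔ p = a := by
  unfold PartQuotient.mk
  split_ifs with h
  · simp only [false_iff]
    rintro rfl
    exact a.2 _ h.choose_spec
  · simp only [Sum.inl.injEq, Subtype.ext_iff]

variable (hS : Pairwise (Disjoint on S))
include hS

lemma eq_of_mem_of_pairwise_disjoint {p : V} {i j : ι} (hi : p ∈ S i) (hj : p ∈ S j) : i = j :=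
  by_contra fun h => Finset.disjoint_left.mp (hS h) hi hj

lemma PartQuotient.mk_eq_inr_iff {p : V} {i : {i : ι // (S i).Nonempty}} :
    PartQuotient.mk S p = .inr i ↔ p ∈ S i := by
  unfold PartQuotient.mk
  split_ifs with h
  · simp only [Sum.inr.injEq, Subtype.ext_iff]
    exact ⟨fun hi => hi ▸ h.choose_spec, eq_of_mem_of_pairwise_disjoint hS h.choose_spec⟩
  · simp only [false_iff]
    exact fun hp => h ⟨i, hp⟩

lemma PartQuotient.mk_eq_mk_iff {p q : V} :
    PartQuotient.mk S p = PartQuotient.mk S q ↔ p = q ∨ ∃ i, p ∈ S i ∧ q ∈ S i := by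
  by_cases hp : ∃ i, p ∈ S i
  · obtain ⟨i, hi⟩ := hp
    rw [(PartQuotient.mk_eq_inr_iff hS (i := ⟨i, p, hi⟩)).mpr hi, eq_comm,
      PartQuotient.mk_eq_inr_iff hS]
    refine ⟨fun hq => .inr ⟨i, hi, hq⟩, ?_⟩
    rintro (rfl | ⟨j, hj, hq⟩)
    · exact hi
    · exact eq_of_mem_of_pairwise_disjoint hS hi hj ▸ hq
  · simp only [not_exists] at hp
    rw [(PartQuotient.mk_eq_inl_iff (a := ⟨p, hp⟩)).mpr rfl, eq_comm, PartQuotient.mk_eq_inl_iff]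
    simp [eq_comm, hp]

variable [Fintype V] [DecidableEq V]

lemma PartQuotient.odd_card_fiber [DecidableEq ι] (hodd : ∀ i, (S i).Nonempty → Odd #(S i))
    (t : PartQuotient S) : Odd #{p | PartQuotient.mk S p = t} := by
  cases t with
  | inl a =>
    rw [filter_congr fun p _ => PartQuotient.mk_eq_inl_iff, filter_eq' univ, if_pos (mem_univ _)]
    exact odd_one
  | inr i =>
    rw [filter_congr fun p _ => PartQuotient.mk_eq_inr_iff hS, filter_mem_eq_inter, univ_inter]
    exact hodd i i.2

lemma PartQuotient.card_add_sum_card_sub_one [Fintype ι] :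
    Nat.card (PartQuotient S) + ∑ i, (#(S i) - 1) = Nat.card V := by
  have hcompl : #{p | ∀ i, p ∉ S i} + ∑ i, #(S i) = Fintype.card V := by
    rw [← card_biUnion (hS.set_pairwise _), ← card_compl_add_card (univ.biUnion S)]
    congr 2
    ext p
    simp
  have hparts : ∑ i, #(S i) = ∑ i, (#(S i) - 1) + #{i | (S i).Nonempty} := by
    rw [card_filter, ← sum_add_distrib]
    refine sum_congr rfl fun i _ => ?_
    split_ifs with h
    · have := h.card_pos
      omega
    · rw [not_nonempty_iff_eq_empty.mp h, card_empty]
  rw [Nat.card_eq_fintype_card, Nat.card_eq_fintype_card, Fintype.card_sum,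
    Fintype.card_subtype, Fintype.card_subtype]
  omega

end PartQuotient

section SteinerDesign

variable {V : Type*}

structure IsSteiner2Design (μ : ℕ) (W : Finset V) (C : Finset (Finset V)) : Prop where
  card_eq : ∀ B ∈ C, #B = μ
  subset : ∀ B ∈ C, B ⊆ W
  existsUnique : ∀ p ∈ W, ∀ q ∈ W, p ≠ q → ∃! B, B ∈ C ∧ p ∈ B ∧ q ∈ B

variable [DecidableEq V] {μ : ℕ} {W : Finset V} {C : Finset (Finset V)}

-- The blocks through `p`, with `p` removed, partition `W \ {p}`.
lemma IsSteiner2Design.card_filter_mem_mul (h : IsSteiner2Design μ W C) {p : V} (hp : p ∈ W) :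
    #{B ∈ C | p ∈ B} * (μ - 1) = #W - 1 := by
  have hcover : {B ∈ C | p ∈ B}.biUnion (·.erase p) = W.erase p := by
    ext q
    simp only [mem_biUnion, mem_filter, mem_erase]
    constructor
    · rintro ⟨B, ⟨hB, -⟩, hqp, hqB⟩
      exact ⟨hqp, h.subset B hB hqB⟩
    · rintro ⟨hqp, hq⟩
      obtain ⟨B, ⟨hB, hpB, hqB⟩, -⟩ := h.existsUnique p hp q hq (Ne.symm hqp)
      exact ⟨B, ⟨hB, hpB⟩, hqp, hqB⟩
  have hdisj : (({B ∈ C | p ∈ B} : Finset _) : Set (Finset V)).PairwiseDisjoint (·.erase p) := by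
    intro B₁ h₁ B₂ h₂ hne
    simp only [mem_coe, mem_filter] at h₁ h₂
    refine disjoint_left.mpr fun q hq₁ hq₂ => hne ?_
    rw [mem_erase] at hq₁ hq₂
    obtain ⟨B, -, huniq⟩ := h.existsUnique p hp q (h.subset _ h₁.1 hq₁.2) (Ne.symm hq₁.1)
    exact (huniq B₁ ⟨h₁.1, h₁.2, hq₁.2⟩).trans (huniq B₂ ⟨h₂.1, h₂.2, hq₂.2⟩).symm
  rw [← card_erase_of_mem hp, ← hcover, card_biUnion hdisj]
  refine (sum_const_nat fun B hB => ?_).symm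
  rw [mem_filter] at hB
  rw [card_erase_of_mem hB.2, h.card_eq B hB.1]

lemma IsSteiner2Design.card_filter_mem (h : IsSteiner2Design μ W C) (hμ : 2 ≤ μ) {r : ℕ}
    (hr : r * (μ - 1) = #W - 1) {p : V} (hp : p ∈ W) : #{B ∈ C | p ∈ B} = r :=
  Nat.eq_of_mul_eq_mul_right (by omega) ((h.card_filter_mem_mul hp).trans hr.symm)

end SteinerDesign

lemma card_filter_sdiff_eq_ite {α : Type*} [DecidableEq α] {C D : Finset α} (hD : D ⊆ C)
    {P : α → Prop} [DecidablePred P] (hP : ∃! B, B ∈ C ∧ P B) :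
    #{B ∈ C \ D | P B} = if ∃ B ∈ D, P B then 0 else 1 := by
  obtain ⟨B₀, ⟨hB₀, hP₀⟩, huniq⟩ := hP
  have hP_iff : ∀ B ∈ C, P B ↔ B = B₀ := fun B hB => ⟨fun h => huniq B ⟨hB, h⟩, (· ▸ hP₀)⟩
  split_ifs with h
  · obtain ⟨B, hBD, hPB⟩ := h
    refine card_eq_zero.mpr (filter_eq_empty_iff.mpr fun B' hB' hPB' => ?_)
    rw [mem_sdiff] at hB'
    exact hB'.2 (((hP_iff B' hB'.1).mp hPB').trans ((hP_iff B (hD hBD)).mp hPB).symm ▸ hBD)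
  · refine card_eq_one.mpr ⟨B₀, ext fun B => ?_⟩
    simp only [mem_filter, mem_sdiff, mem_singleton]
    grind

lemma incidence_mul_transpose_apply {V R : Type*} [DecidableEq V] [Semiring R]
    {C : Finset (Finset V)} {_ : Fintype {B // B ∈ C}} (H : Matrix V {B // B ∈ C} R)
    (hH : ∀ p B, H p B = if p ∈ B.1 then 1 else 0) (p q : V) :
    (H * H.transpose) p q = #{B ∈ C | p ∈ B ∧ q ∈ B} := by
  simp only [Matrix.mul_apply, Matrix.transpose_apply, hH, ite_zero_mul_ite_zero, mul_one]
  rw [← sum_subtype C (fun _ => Iff.rfl) fun B => if p ∈ B ∧ q ∈ B then (1 : R) else 0,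
    sum_boole]

section RemovedSubdesigns

variable {V ι : Type*} [DecidableEq V] [Fintype ι] {μ : ℕ}
  {𝓑 : Finset (Finset V)} {Vs : ι → Finset V} {Bs : ι → Finset (Finset V)}

lemma even_card_filter_mem_biUnion (hVs : Pairwise (Disjoint on Vs))
    (hsub : ∀ i, ∀ B ∈ Bs i, B ⊆ Vs i) (heven : ∀ i, ∀ p ∈ Vs i, Even #{B ∈ Bs i | p ∈ B})
    (p : V) : Even #{B ∈ univ.biUnion Bs | p ∈ B} := by
  rw [filter_biUnion, card_biUnion]
  · refine even_sum _ fun i _ => ?_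
    by_cases hp : p ∈ Vs i
    · exact heven i p hp
    · rw [filter_false_of_mem fun B hB hpB => hp (hsub i B hB hpB), card_empty]
      exact .zero
  · intro i _ i' _ hne
    refine disjoint_left.mpr fun B hB hB' => ?_
    rw [mem_filter] at hB hB'
    exact disjoint_left.mp (hVs hne) (hsub i B hB.1 hB.2) (hsub i' B hB'.1 hB'.2)

lemma exists_mem_biUnion_and_mem_iff (hsub : ∀ i, IsSteiner2Design μ (Vs i) (Bs i)) {p q : V}
    (hpq : p ≠ q) : (∃ B ∈ univ.biUnion Bs, p ∈ B ∧ q ∈ B) ↔ ∃ i, p ∈ Vs i ∧ q ∈ Vs i := by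
  simp only [mem_biUnion, mem_univ, true_and]
  constructor
  · rintro ⟨B, ⟨i, hB⟩, hpB, hqB⟩
    exact ⟨i, (hsub i).subset B hB hpB, (hsub i).subset B hB hqB⟩
  · rintro ⟨i, hp, hq⟩
    obtain ⟨B, ⟨hB, hpB, hqB⟩, -⟩ := (hsub i).existsUnique p hp q hq hpq
    exact ⟨B, ⟨i, hB⟩, hpB, hqB⟩

theorem incidence_gram_eq_fiberMatrix [Fintype V] [DecidableEq ι]
    (h𝓑 : ∀ p q : V, p ≠ q → ∃! B, B ∈ 𝓑 ∧ p ∈ B ∧ q ∈ B)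
    (hodd : ∀ p, Odd #{B ∈ 𝓑 | p ∈ B}) (hBs : ∀ i, Bs i ⊆ 𝓑)
    (hsub : ∀ i, IsSteiner2Design μ (Vs i) (Bs i)) (hVs : Pairwise (Disjoint on Vs))
    (heven : ∀ i, ∀ p ∈ Vs i, Even #{B ∈ Bs i | p ∈ B})
    (H : Matrix V {B // B ∈ 𝓑 \ univ.biUnion Bs} (ZMod 2))
    (hH : ∀ p B, H p B = if p ∈ B.1 then 1 else 0) :
    H * H.transpose = fiberMatrix (PartQuotient.mk Vs) := by
  refine Matrix.ext fun p q => ?_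
  rw [incidence_mul_transpose_apply H hH, fiberMatrix, Matrix.of_apply]
  obtain rfl | hpq := eq_or_ne p q
  · simp only [and_self, ne_eq, not_true_eq_false, false_and, if_false]
    have hsplit : #{B ∈ 𝓑 \ univ.biUnion Bs | p ∈ B} + #{B ∈ univ.biUnion Bs | p ∈ B}
        = #{B ∈ 𝓑 | p ∈ B} := by
      rw [← card_union_of_disjoint (disjoint_filter_filter disjoint_sdiff_self_left),
        ← filter_union, sdiff_union_of_subset (biUnion_subset.mpr fun i _ => hBs i)]
    rw [ZMod.natCast_eq_one_iff_odd]
    exact (Nat.odd_add.mp (hsplit ▸ hodd p)).mpr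
      (even_card_filter_mem_biUnion hVs (fun i => (hsub i).subset) heven p)
  · rw [card_filter_sdiff_eq_ite (biUnion_subset.mpr fun i _ => hBs i) (h𝓑 p q hpq)]
    simp only [exists_mem_biUnion_and_mem_iff hsub hpq, PartQuotient.mk_eq_mk_iff hVs, hpq,
      ne_eq, not_false_eq_true, true_and, false_or]
    split_ifs <;> simp

end RemovedSubdesigns

theorem stmt_4_general (μ v r j : ℕ) (hμ : 2 ≤ μ)
    (V : Type) [Fintype V] [DecidableEq V] (hv : Fintype.card V = v)
    (𝓑 : Finset (Finset V))
    (hblocks : ∀ B ∈ 𝓑, B.card = μ)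
    (hpairs : ∀ p q : V, p ≠ q → ∃! B, B ∈ 𝓑 ∧ p ∈ B ∧ q ∈ B)
    (hr : r * (μ - 1) = v - 1) (hrodd : Odd r)
    (Vs : Fin j → Finset V) (Bs : Fin j → Finset (Finset V))
    (hBs : ∀ i, Bs i ⊂ 𝓑)
    (hsubblocks : ∀ i, ∀ B ∈ Bs i, B ⊆ Vs i)
    (hsubpairs : ∀ i, ∀ p ∈ Vs i, ∀ q ∈ Vs i, p ≠ q → ∃! B, B ∈ Bs i ∧ p ∈ B ∧ q ∈ B)
    (hdisj : ∀ i i', i ≠ i' → Disjoint (Vs i) (Vs i'))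
    (rs : Fin j → ℕ) (hrs : ∀ i, rs i * (μ - 1) = (Vs i).card - 1)
    (hrseven : ∀ i, Even (rs i))
    (H' : Matrix V {B // B ∈ 𝓑 \ Finset.univ.biUnion Bs} (ZMod 2))
    (hH' : ∀ p B, H' p B = if p ∈ B.1 then 1 else 0) :
    (H' * H'.transpose).rank = (∑ i : Fin j, ((Vs i).card - 1)) + 1 := by
  have hdesign : IsSteiner2Design μ univ 𝓑 :=
    ⟨hblocks, fun B _ => subset_univ B, fun p _ q _ => hpairs p q⟩
  have hsub (i : Fin j) : IsSteiner2Design μ (Vs i) (Bs i) :=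
    ⟨fun B hB => hblocks B ((hBs i).subset hB), hsubblocks i, hsubpairs i⟩
  have hpart : Pairwise (Disjoint on Vs) := fun i i' => hdisj i i'
  have hodd_part (i : Fin j) (hi : (Vs i).Nonempty) : Odd #(Vs i) := by
    obtain ⟨k, hk⟩ : Even (#(Vs i) - 1) := hrs i ▸ (hrseven i).mul_right _
    exact ⟨k, by have := hi.card_pos; omega⟩
  have : Nonempty V := by
    have := Nat.mul_pos hrodd.pos (by omega : 0 < μ - 1)
    rw [← Fintype.card_pos_iff]
    omega
  have hgram := incidence_gram_eq_fiberMatrix hpairs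
    (fun p => hdesign.card_filter_mem hμ (by rwa [card_univ, hv]) (mem_univ p) ▸ hrodd)
    (fun i => (hBs i).subset) hsub hpart
    (fun i p hp => (hsub i).card_filter_mem hμ (hrs i) hp ▸ hrseven i) H' hH'
  have hrank := rank_fiberMatrix_add_card (PartQuotient.odd_card_fiber hpart hodd_part)
  have hcard := PartQuotient.card_add_sum_card_sub_one hpart
  rw [Nat.card_eq_fintype_card (α := V), hv] at hrank hcard
  rw [hgram]
  omega

/-- Deleting `j` point-wise mutually disjoint subdesigns, each with even
replication number, from a Steiner 2-design `S(2, μ, v)` with odd replication number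
yields an incidence matrix `H'` with `rank(H' * H'ᵀ) = (|V₁|-1) + ⋯ + (|Vⱼ|-1) + 1`
over `𝔽₂`. -/
theorem stmt_4 (μ v r j : ℕ) (hμ : 2 ≤ μ)
    (V : Type) [Fintype V] [DecidableEq V] (hv : Fintype.card V = v)
    (𝓑 : Finset (Finset V))
    (hblocks : ∀ B ∈ 𝓑, B.card = μ)
    (hpairs : ∀ p q : V, p ≠ q → ∃! B, B ∈ 𝓑 ∧ p ∈ B ∧ q ∈ B)
    (hr : r * (μ - 1) = v - 1) (hrodd : Odd r)
    (Vs : Fin j → Finset V) (Bs : Fin j → Finset (Finset V))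
    (hVs : ∀ i, Vs i ⊂ Finset.univ)
    (hBs : ∀ i, Bs i ⊂ 𝓑)
    (hsubblocks : ∀ i, ∀ B ∈ Bs i, B ⊆ Vs i)
    (hsubpairs : ∀ i, ∀ p ∈ Vs i, ∀ q ∈ Vs i, p ≠ q → ∃! B, B ∈ Bs i ∧ p ∈ B ∧ q ∈ B)
    (hdisj : ∀ i i', i ≠ i' → Disjoint (Vs i) (Vs i'))
    (hunion : Finset.univ.biUnion Vs ⊆ Finset.univ)
    (rs : Fin j → ℕ) (hrs : ∀ i, rs i * (μ - 1) = (Vs i).card - 1)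
    (hrseven : ∀ i, Even (rs i))
    (H' : Matrix V {B // B ∈ 𝓑 \ Finset.univ.biUnion Bs} (ZMod 2))
    (hH' : ∀ p B, H' p B = if p ∈ B.1 then 1 else 0) :
    (H' * H'.transpose).rank = (∑ i : Fin j, ((Vs i).card - 1)) + 1 :=
  stmt_4_general μ v r j hμ V hv 𝓑 hblocks hpairs hr hrodd Vs Bs hBs hsubblocks hsubpairs hdisj rs
    hrs hrseven H' hH'
end

section
/- Let q be an odd prime power and 𝔽_q a finite field of order q. Consider the binary linear code whose codewords are the functions x from the set of 2-dimensional linear subspaces (lines) of 𝔽_q³ to 𝔽₂ such that for every 1-dimensional linear subspace (point) P of 𝔽_q³, the sum over all lines L containing P of x(L) is 0 in 𝔽₂ (i.e., the code with parity-check matrix the point-by-line incidence matrix of PG₁(2,q)). Then this code consists of exactly two codewords: the zero vector and the all-one vector. -/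
open scoped Classical

open Module Submodule

-- count of rank-1 submodules of a rank-2 space over a finite field
lemma aux_count (F : Type) [Field F] [Fintype F]
    (V : Type) [AddCommGroup V] [Module F V] [FiniteDimensional F V]
    (h2 : Module.finrank F V = 2) :
    Nat.card {P : Submodule F V // Module.finrank F P = 1} = Fintype.card F + 1 := by
  haveI : Finite V := Module.finite_of_finite F
  haveI := Fintype.ofFinite V
  set q := Fintype.card F with hq
  have hq2 : 2 ≤ q := Fintype.one_lt_card
  -- equivalence between nonzero vectors and pairs (line, nonzero vector of it)
  have e : {v : V // v ≠ 0} ≃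
      Σ P : {P : Submodule F V // Module.finrank F P = 1}, {v : P.1 // v ≠ 0} := by
    refine
      { toFun := fun v => ⟨⟨F ∙ v.1, finrank_span_singleton v.2⟩,
          ⟨⟨v.1, mem_span_singleton_self _⟩, by
            simp [Subtype.ext_iff, v.2]⟩⟩
        invFun := fun x => ⟨x.2.1.1, fun h => x.2.2 (by ext; simp [h])⟩
        left_inv := fun v => rfl
        right_inv := ?_ }
    rintro ⟨⟨P, hP⟩, ⟨⟨v, hv⟩, hv0⟩⟩
    have hvne : v ≠ 0 := fun h => hv0 (by ext; simp [h])
    have hsp : (F ∙ v) = P := by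
      apply Submodule.eq_of_le_of_finrank_le
        ((span_le).2 (by simpa using hv))
      rw [hP, finrank_span_singleton hvne]
    subst hsp
    rfl
  haveI : Finite (Submodule F V) :=
    Finite.of_injective (fun p => (p : Set V)) SetLike.coe_injective
  haveI : Fintype {P : Submodule F V // Module.finrank F P = 1} := Fintype.ofFinite _
  haveI : ∀ P : Submodule F V, Fintype P := fun P => Fintype.ofFinite _
  have hfib : ∀ P : {P : Submodule F V // Module.finrank F P = 1},
      Fintype.card {v : P.1 // v ≠ 0} = q - 1 := by
    intro P
    have hc : Fintype.card P.1 = q := by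
      rw [card_eq_pow_finrank (K := F) (V := P.1), P.2, pow_one]
    rw [Fintype.card_subtype_compl, Fintype.card_subtype_eq, hc]
  have hV : Fintype.card {v : V // v ≠ 0} = q ^ 2 - 1 := by
    rw [Fintype.card_subtype_compl, Fintype.card_subtype_eq,
      card_eq_pow_finrank (K := F) (V := V), h2]
  have hsig := Fintype.card_congr e
  rw [hV, Fintype.card_sigma] at hsig
  simp only [hfib] at hsig
  rw [Finset.sum_const, smul_eq_mul] at hsig
  set N := Fintype.card {P : Submodule F V // Module.finrank F P = 1} with hN
  rw [Nat.card_eq_fintype_card, ← hN]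
  clear_value q N
  obtain ⟨k, rfl⟩ : ∃ k, q = k + 2 := ⟨q - 2, by omega⟩
  have hsq : (k + 2) ^ 2 = (k + 3) * (k + 1) + 1 := by ring
  rw [hsq, Nat.add_sub_cancel] at hsig
  have := Nat.eq_of_mul_eq_mul_right (Nat.succ_pos k) (by simpa using hsig.symm)
  omega

lemma finrank_comap_mkQ (F M : Type) [Field F] [AddCommGroup M] [Module F M]
    [FiniteDimensional F M] (P : Submodule F M) (W : Submodule F (M ⧸ P)) :
    Module.finrank F (W.comap P.mkQ) = Module.finrank F W + Module.finrank F P := by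
  set N := W.comap P.mkQ with hNdef
  have hPN : P ≤ N := by
    intro x hx
    show P.mkQ x ∈ W
    rw [show P.mkQ x = 0 by simpa using (Submodule.Quotient.mk_eq_zero P).2 hx]
    exact W.zero_mem
  have hmap : N.map P.mkQ = W := by
    rw [hNdef, Submodule.map_comap_eq, Submodule.range_mkQ, top_inf_eq]
  have h1 := N.finrank_quotient_add_finrank
  have h2 := W.finrank_quotient_add_finrank
  have h3 := P.finrank_quotient_add_finrank
  have h4 : Module.finrank F ((M ⧸ P) ⧸ N.map P.mkQ) = Module.finrank F (M ⧸ N) :=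
    LinearEquiv.finrank_eq (Submodule.quotientQuotientEquivQuotient P N hPN)
  rw [hmap] at h4
  omega

lemma lines_through (F : Type) [Field F] [Fintype F]
    (P : Submodule F (Fin 3 → F)) (hP : Module.finrank F P = 1) :
    Nat.card {L : {L : Submodule F (Fin 3 → F) // Module.finrank F L = 2} // P ≤ L.1}
      = Fintype.card F + 1 := by
  have h3 : Module.finrank F (Fin 3 → F) = 3 := by simp
  have hquot : Module.finrank F ((Fin 3 → F) ⧸ P) = 2 := by
    have := P.finrank_quotient_add_finrank
    omega
  have key : ∀ L : Submodule F (Fin 3 → F), Module.finrank F L = 2 → P ≤ L →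
      (L.map P.mkQ).comap P.mkQ = L := by
    intro L hL hPL
    rw [Submodule.comap_map_eq, Submodule.ker_mkQ, sup_eq_left.2 hPL]
  have e : {L : {L : Submodule F (Fin 3 → F) // Module.finrank F L = 2} // P ≤ L.1}
      ≃ {W : Submodule F ((Fin 3 → F) ⧸ P) // Module.finrank F W = 1} := by
    refine
      { toFun := fun L => ⟨L.1.1.map P.mkQ, ?_⟩
        invFun := fun W => ⟨⟨W.1.comap P.mkQ, by
          rw [finrank_comap_mkQ, W.2, hP]⟩, fun x hx => by
            show P.mkQ x ∈ W.1
            rw [show P.mkQ x = 0 by simpa using (Submodule.Quotient.mk_eq_zero P).2 hx]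
            exact W.1.zero_mem⟩
        left_inv := fun L => by
          ext1; ext1
          exact key L.1.1 L.1.2 L.2
        right_inv := fun W => by
          ext1
          dsimp only
          rw [Submodule.map_comap_eq, Submodule.range_mkQ, top_inf_eq] }
    have := finrank_comap_mkQ F (Fin 3 → F) P (L.1.1.map P.mkQ)
    rw [key L.1.1 L.1.2 L.2, L.1.2, hP] at this
    omega
  rw [Nat.card_congr e]
  exact aux_count F _ hquot

lemma points_on (F : Type) [Field F] [Fintype F]
    (L : Submodule F (Fin 3 → F)) (hL : Module.finrank F L = 2) :
    Nat.card {P : {P : Submodule F (Fin 3 → F) // Module.finrank F P = 1} // P.1 ≤ L}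
      = Fintype.card F + 1 := by
  have e : {P : {P : Submodule F (Fin 3 → F) // Module.finrank F P = 1} // P.1 ≤ L}
      ≃ {W : Submodule F L // Module.finrank F W = 1} := by
    refine
      { toFun := fun P => ⟨P.1.1.comap L.subtype, ?_⟩
        invFun := fun W => ⟨⟨W.1.map L.subtype, by
          rw [Submodule.finrank_map_subtype_eq]; exact W.2⟩,
          Submodule.map_subtype_le L W.1⟩
        left_inv := fun P => by
          ext1; ext1
          dsimp only
          rw [Submodule.map_comap_subtype, inf_eq_right.2 P.2]
        right_inv := fun W => by
          ext1
          dsimp only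
          rw [Submodule.comap_map_eq, Submodule.ker_subtype, sup_bot_eq] }
    rw [← Submodule.finrank_map_subtype_eq, Submodule.map_comap_subtype,
      inf_eq_right.2 P.2]
    exact P.1.2
  rw [Nat.card_congr e]
  exact aux_count F _ hL

/-- for `q` an odd prime power, the binary linear code whose parity-check
matrix is the point-by-line incidence matrix of `PG₁(2, q)` (points: 1-dimensional
subspaces of `𝔽_q³`; lines: 2-dimensional subspaces) consists of exactly the zero vector
and the all-one vector. -/
theorem stmt_7 (q : ℕ) (hq : Odd q)
    (F : Type) [Field F] [Fintype F] (hF : Fintype.card F = q) :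
    {x : {L : Submodule F (Fin 3 → F) // Module.finrank F L = 2} → ZMod 2 |
        ∀ P : {P : Submodule F (Fin 3 → F) // Module.finrank F P = 1},
          ∑ᶠ L ∈ {L : {L : Submodule F (Fin 3 → F) // Module.finrank F L = 2} |
              P.1 ≤ L.1}, x L = 0} =
      {0, fun _ => 1} := by
  haveI : Finite (Submodule F (Fin 3 → F)) :=
    Finite.of_injective (fun p => (p : Set (Fin 3 → F))) SetLike.coe_injective
  haveI : Fintype {L : Submodule F (Fin 3 → F) // Module.finrank F L = 2} :=
    Fintype.ofFinite _
  haveI : Fintype {P : Submodule F (Fin 3 → F) // Module.finrank F P = 1} :=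
    Fintype.ofFinite _
  have heven : ((q + 1 : ℕ) : ZMod 2) = 0 := by
    rw [ZMod.natCast_eq_zero_iff]
    obtain ⟨m, rfl⟩ := hq
    exact ⟨m + 1, by ring⟩
  have hfin : ∀ (x : {L : Submodule F (Fin 3 → F) // Module.finrank F L = 2} → ZMod 2)
      (P : {P : Submodule F (Fin 3 → F) // Module.finrank F P = 1}),
      ∑ᶠ L ∈ {L : {L : Submodule F (Fin 3 → F) // Module.finrank F L = 2} |
          P.1 ≤ L.1}, x L
        = ∑ L ∈ Finset.univ.filter
            (fun L : {L : Submodule F (Fin 3 → F) // Module.finrank F L = 2} =>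
              P.1 ≤ L.1), x L := by
    intro x P
    rw [show {L : {L : Submodule F (Fin 3 → F) // Module.finrank F L = 2} | P.1 ≤ L.1}
        = ↑(Finset.univ.filter
            (fun L : {L : Submodule F (Fin 3 → F) // Module.finrank F L = 2} =>
              P.1 ≤ L.1)) by ext; simp]
    exact finsum_mem_coe_finset _ _
  have cardlines : ∀ P : {P : Submodule F (Fin 3 → F) // Module.finrank F P = 1},
      (Finset.univ.filter
        (fun L : {L : Submodule F (Fin 3 → F) // Module.finrank F L = 2} =>
          P.1 ≤ L.1)).card = q + 1 := by
    intro P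
    rw [← Fintype.card_subtype, ← Nat.card_eq_fintype_card, lines_through F P.1 P.2, hF]
  have cardpts : ∀ L₀ : {L : Submodule F (Fin 3 → F) // Module.finrank F L = 2},
      (Finset.univ.filter
        (fun P : {P : Submodule F (Fin 3 → F) // Module.finrank F P = 1} =>
          P.1 ≤ L₀.1)).card = q + 1 := by
    intro L₀
    rw [← Fintype.card_subtype, ← Nat.card_eq_fintype_card, points_on F L₀.1 L₀.2, hF]
  ext x
  simp only [Set.mem_setOf_eq, Set.mem_insert_iff, Set.mem_singleton_iff]
  constructor
  · intro hx
    replace hx : ∀ P : {P : Submodule F (Fin 3 → F) // Module.finrank F P = 1},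
        ∑ L ∈ Finset.univ.filter
          (fun L : {L : Submodule F (Fin 3 → F) // Module.finrank F L = 2} =>
            P.1 ≤ L.1), x L = 0 := fun P => by rw [← hfin x P]; exact hx P
    set S := ∑ L : {L : Submodule F (Fin 3 → F) // Module.finrank F L = 2}, x L with hS
    have hxconst : ∀ L₀, x L₀ = S := by
      intro L₀
      have hT : ∑ P ∈ Finset.univ.filter
          (fun P : {P : Submodule F (Fin 3 → F) // Module.finrank F P = 1} =>
            P.1 ≤ L₀.1),
          ∑ L ∈ Finset.univ.filter
            (fun L : {L : Submodule F (Fin 3 → F) // Module.finrank F L = 2} =>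
              P.1 ≤ L.1), x L = 0 :=
        Finset.sum_eq_zero fun P _ => hx P
      have step1 : ∑ P ∈ Finset.univ.filter
          (fun P : {P : Submodule F (Fin 3 → F) // Module.finrank F P = 1} =>
            P.1 ≤ L₀.1),
          ∑ L ∈ Finset.univ.filter
            (fun L : {L : Submodule F (Fin 3 → F) // Module.finrank F L = 2} =>
              P.1 ≤ L.1), x L
          = ∑ P : {P : Submodule F (Fin 3 → F) // Module.finrank F P = 1},
              ∑ L : {L : Submodule F (Fin 3 → F) // Module.finrank F L = 2},
                (if P.1 ≤ L₀.1 ∧ P.1 ≤ L.1 then x L else 0) := by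
        rw [Finset.sum_filter]
        refine Finset.sum_congr rfl fun P _ => ?_
        by_cases hP : P.1 ≤ L₀.1 <;> simp [hP, Finset.sum_filter]
      have step2 : ∑ P : {P : Submodule F (Fin 3 → F) // Module.finrank F P = 1},
              ∑ L : {L : Submodule F (Fin 3 → F) // Module.finrank F L = 2},
                (if P.1 ≤ L₀.1 ∧ P.1 ≤ L.1 then x L else 0)
          = ∑ L : {L : Submodule F (Fin 3 → F) // Module.finrank F L = 2},
              ∑ P : {P : Submodule F (Fin 3 → F) // Module.finrank F P = 1},
                (if P.1 ≤ L₀.1 ∧ P.1 ≤ L.1 then x L else 0) := Finset.sum_comm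
      have step3 : ∀ L : {L : Submodule F (Fin 3 → F) // Module.finrank F L = 2},
          ∑ P : {P : Submodule F (Fin 3 → F) // Module.finrank F P = 1},
            (if P.1 ≤ L₀.1 ∧ P.1 ≤ L.1 then x L else 0)
          = (if L = L₀ then 0 else x L) := by
        intro L
        rw [← Finset.sum_filter, Finset.sum_const]
        by_cases hL : L = L₀
        · rw [if_pos hL, hL]
          rw [show (Finset.univ.filter
              (fun P : {P : Submodule F (Fin 3 → F) // Module.finrank F P = 1} =>
                P.1 ≤ L₀.1 ∧ P.1 ≤ L₀.1)) = Finset.univ.filter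
              (fun P : {P : Submodule F (Fin 3 → F) // Module.finrank F P = 1} =>
                P.1 ≤ L₀.1) from by simp, cardpts L₀, nsmul_eq_mul, heven, zero_mul]
        · rw [if_neg hL]
          -- the two lines meet in a unique point
          have hne : L.1 ≠ L₀.1 := fun h => hL (Subtype.ext h)
          have hsup : Module.finrank F ↥(L.1 ⊔ L₀.1) = 3 := by
            have hlt : L.1 < L.1 ⊔ L₀.1 := by
              refine lt_of_le_of_ne le_sup_left fun h => hne ?_
              have h0 : L₀.1 ≤ L.1 := h ▸ le_sup_right
              exact (Submodule.eq_of_le_of_finrank_le h0 (by rw [L.2, L₀.2])).symm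
            have h1 := Submodule.finrank_lt_finrank_of_lt hlt
            have h2 := Submodule.finrank_le (L.1 ⊔ L₀.1)
            have h3 : Module.finrank F (Fin 3 → F) = 3 := by simp
            rw [L.2] at h1
            omega
          have hD : Module.finrank F ↥(L.1 ⊓ L₀.1) = 1 := by
            have := Submodule.finrank_sup_add_finrank_inf_eq L.1 L₀.1
            rw [hsup, L.2, L₀.2] at this
            omega
          have hsingle : (Finset.univ.filter
              (fun P : {P : Submodule F (Fin 3 → F) // Module.finrank F P = 1} =>
                P.1 ≤ L₀.1 ∧ P.1 ≤ L.1)) = {⟨L.1 ⊓ L₀.1, hD⟩} := by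
            refine Finset.eq_singleton_iff_unique_mem.2 ⟨?_, ?_⟩
            · simp [Finset.mem_filter, inf_le_left, inf_le_right]
            · intro P hP
              rw [Finset.mem_filter] at hP
              refine Subtype.ext ?_
              exact Submodule.eq_of_le_of_finrank_le (le_inf hP.2.2 hP.2.1)
                (by rw [hD, P.2])
          rw [hsingle, Finset.card_singleton, one_nsmul]
      have hzero : ∑ L : {L : Submodule F (Fin 3 → F) // Module.finrank F L = 2},
          (if L = L₀ then 0 else x L) = 0 := by
        rw [← Finset.sum_congr rfl (fun L _ => step3 L), ← step2, ← step1, hT]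
      have herase : ∑ L : {L : Submodule F (Fin 3 → F) // Module.finrank F L = 2},
          (if L = L₀ then 0 else x L)
          = ∑ L ∈ Finset.univ.erase L₀, x L := by
        rw [← Finset.add_sum_erase _ _ (Finset.mem_univ L₀), if_pos rfl, zero_add]
        exact Finset.sum_congr rfl fun L hL => if_neg (Finset.mem_erase.1 hL).1
      have hsplit : S = x L₀ + ∑ L ∈ Finset.univ.erase L₀, x L :=
        (Finset.add_sum_erase _ _ (Finset.mem_univ L₀)).symm
      rw [hsplit, ← herase, hzero, add_zero]
    have hcases : S = 0 ∨ S = 1 := by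
      have : ∀ s : ZMod 2, s = 0 ∨ s = 1 := by decide
      exact this S
    rcases hcases with h | h
    · left
      funext L
      rw [hxconst L, h]
      rfl
    · right
      funext L
      rw [hxconst L, h]
  · rintro (rfl | rfl) <;> intro P
    · exact (hfin 0 P).trans (by simp)
    · exact (hfin (fun _ => 1) P).trans
        (by rw [Finset.sum_const, cardlines P, nsmul_eq_mul, mul_one, heven])
end

section
/- Let q be a prime power, 𝔽_q a finite field of order q, and let s, m ≥ 1 be integers such that s+1 divides m+1. Then there exists a family 𝒮 of (s+1)-dimensional linear subspaces of 𝔽_q^{m+1} of cardinality (q^{m+1}−1)/(q^{s+1}−1) such that every nonzero vector of 𝔽_q^{m+1} lies in exactly one member of 𝒮 (equivalently, the point sets of the corresponding copies of PG₁(s,q) partition the points of PG₁(m,q)). -/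
/-!
Write `m + 1 = (s + 1) k` and let `K` be the extension of `F` of degree `s + 1`. Then `K^k` is an
`F`-space of dimension `m + 1`, and its `K`-lines, seen as `F`-subspaces, have dimension `s + 1`
and partition the nonzero vectors (the Desarguesian spread). Counting nonzero vectors gives the
number of lines.
-/

open Module Finset

variable {F V W : Type*} [Field F] [AddCommGroup V] [Module F V] [AddCommGroup W] [Module F W]

/-- Only the partition property of a spread; the common dimension of the members is stated
separately. -/
def IsSpread (𝒮 : Finset (Submodule F V)) : Prop :=
  ∀ x : V, x ≠ 0 → ∃! U, U ∈ 𝒮 ∧ x ∈ U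

namespace IsSpread

theorem card_mul_sub_one [Finite V] {𝒮 : Finset (Submodule F V)} (h𝒮 : IsSpread 𝒮) {N : ℕ}
    (hN : ∀ U ∈ 𝒮, Nat.card U = N) : #𝒮 * (N - 1) = Nat.card V - 1 := by
  classical
  have := Fintype.ofFinite V
  let nonzero (U : Submodule F V) : Finset V := (univ.filter (· ∈ U)).erase 0
  have hcover : univ.erase (0 : V) = 𝒮.biUnion nonzero := by
    ext x
    simp only [mem_erase, mem_univ, and_true, mem_biUnion, mem_filter, true_and, nonzero]
    constructor
    · intro hx
      obtain ⟨U, ⟨hU, hxU⟩, -⟩ := h𝒮 x hx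
      exact ⟨U, hU, hx, hxU⟩
    · rintro ⟨U, -, hx, -⟩
      exact hx
  have hdisj : (𝒮 : Set (Submodule F V)).PairwiseDisjoint nonzero := by
    intro U hU U' hU' hne
    refine Finset.disjoint_left.mpr fun x hxU hxU' => hne ?_
    simp only [mem_erase, mem_filter, mem_univ, true_and, nonzero] at hxU hxU'
    exact (h𝒮 x hxU.1).unique ⟨hU, hxU.2⟩ ⟨hU', hxU'.2⟩
  have hpiece : ∀ U ∈ 𝒮, #(nonzero U) = N - 1 := by
    intro U hU
    rw [card_erase_of_mem (by simp), ← Fintype.card_subtype, ← Nat.card_eq_fintype_card,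
      ← hN U hU]
  rw [Nat.card_eq_fintype_card, ← card_univ, ← card_erase_of_mem (mem_univ 0), hcover,
    card_biUnion hdisj, sum_congr rfl hpiece, sum_const, smul_eq_mul]

theorem image_map {𝒮 : Finset (Submodule F V)} (h𝒮 : IsSpread 𝒮) (e : V ≃ₗ[F] W) :
    IsSpread (𝒮.image (Submodule.map (e : V →ₗ[F] W))) := by
  classical
  intro x hx
  obtain ⟨U, ⟨hU, hxU⟩, huniq⟩ := h𝒮 (e.symm x) (by simpa using hx)
  refine ⟨U.map (e : V →ₗ[F] W), ⟨mem_image_of_mem _ hU, (Submodule.mem_map_equiv _).mpr hxU⟩, ?_⟩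
  rintro _ ⟨hmem, hxU'⟩
  obtain ⟨U', hU', rfl⟩ := mem_image.mp hmem
  rw [huniq U' ⟨hU', (Submodule.mem_map_equiv _).mp hxU'⟩]

end IsSpread

section Lines

variable (F) {K : Type*} [Field K] [Algebra F K] [Module K V] [IsScalarTower F K V]

theorem finrank_restrictScalars_span_singleton {v : V} (hv : v ≠ 0) :
    finrank F ((K ∙ v).restrictScalars F) = finrank F K :=
  (((K ∙ v).restrictScalarsEquiv F K).trans
    (LinearEquiv.toSpanNonzeroSingleton K V v hv).symm).restrictScalars F |>.finrank_eq

theorem span_singleton_eq_of_mem {u v : V} (hu : u ≠ 0) (huv : u ∈ K ∙ v) :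
    (K ∙ u) = K ∙ v := by
  obtain ⟨c, rfl⟩ := Submodule.mem_span_singleton.mp huv
  exact Submodule.span_singleton_smul_eq (IsUnit.mk0 c (left_ne_zero_of_smul hu)) v

theorem exists_isSpread_finrank_eq_finrank [Finite V] :
    ∃ 𝒮 : Finset (Submodule F V), (∀ U ∈ 𝒮, finrank F U = finrank F K) ∧ IsSpread 𝒮 := by
  let line (v : {v : V // v ≠ 0}) : Submodule F V := (K ∙ (v : V)).restrictScalars F
  refine ⟨(Set.finite_range line).toFinset, ?_, ?_⟩
  · rintro _ hU
    obtain ⟨v, rfl⟩ := (Set.finite_range line).mem_toFinset.mp hU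
    exact finrank_restrictScalars_span_singleton F v.2
  · intro x hx
    refine ⟨line ⟨x, hx⟩, ⟨(Set.finite_range line).mem_toFinset.mpr ⟨_, rfl⟩,
      Submodule.mem_span_singleton_self x⟩, ?_⟩
    rintro _ ⟨hU, hxU⟩
    obtain ⟨v, rfl⟩ := (Set.finite_range line).mem_toFinset.mp hU
    simp only [line, span_singleton_eq_of_mem hx hxU]

end Lines

theorem exists_isSpread_finrank_eq_of_dvd [Finite F] [FiniteDimensional F W] {d : ℕ} [NeZero d]
    (hd : d ∣ finrank F W) :
    ∃ 𝒮 : Finset (Submodule F W), (∀ U ∈ 𝒮, finrank F U = d) ∧ IsSpread 𝒮 := by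
  obtain ⟨k, hk⟩ := hd
  have := ringChar.charP F
  have : Fact (ringChar F).Prime := ⟨CharP.char_is_prime F _⟩
  let K := FiniteField.Extension F (ringChar F) d
  have hK : finrank F K = d := FiniteField.finrank_extension F _ d
  have hV : finrank F (Fin k → K) = finrank F W := by
    rw [← finrank_mul_finrank F K, finrank_fin_fun, hK, hk]
  let e := LinearEquiv.ofFinrankEq (Fin k → K) W hV
  obtain ⟨𝒮, h𝒮rank, h𝒮⟩ := exists_isSpread_finrank_eq_finrank F (K := K) (V := Fin k → K)
  refine ⟨𝒮.image (Submodule.map (e : (Fin k → K) →ₗ[F] W)), ?_, h𝒮.image_map e⟩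
  rintro _ hmem
  obtain ⟨U, hU, rfl⟩ := mem_image.mp hmem
  rw [LinearEquiv.finrank_map_eq, h𝒮rank U hU, hK]

theorem stmt_9_general (q s m : ℕ) (hdvd : (s + 1) ∣ (m + 1))
    (F : Type) [Field F] [Fintype F] (hF : Fintype.card F = q) :
    ∃ 𝒮 : Finset (Submodule F (Fin (m + 1) → F)),
      (∀ W ∈ 𝒮, Module.finrank F W = s + 1) ∧
      𝒮.card = (q ^ (m + 1) - 1) / (q ^ (s + 1) - 1) ∧
      (∀ x : Fin (m + 1) → F, x ≠ 0 → ∃! W, W ∈ 𝒮 ∧ x ∈ W) := by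
  obtain ⟨𝒮, h𝒮rank, h𝒮⟩ :=
    exists_isSpread_finrank_eq_of_dvd (F := F) (W := Fin (m + 1) → F) (d := s + 1)
      (by rwa [finrank_fin_fun])
  have hcard : ∀ U ∈ 𝒮, Nat.card U = q ^ (s + 1) := fun U hU => by
    rw [natCard_eq_pow_finrank (K := F), h𝒮rank U hU, Nat.card_eq_fintype_card, hF]
  have hcount := h𝒮.card_mul_sub_one hcard
  rw [natCard_eq_pow_finrank (K := F), finrank_fin_fun, Nat.card_eq_fintype_card, hF] at hcount
  have hq : 1 < q ^ (s + 1) := Nat.one_lt_pow (Nat.succ_ne_zero s) (hF ▸ Fintype.one_lt_card)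
  exact ⟨𝒮, h𝒮rank, Nat.eq_div_of_mul_eq_left (by omega) hcount, h𝒮⟩

/-- if `s + 1` divides `m + 1`, then `PG(m, q)` admits an `s`-spread: a
family of `(q^{m+1} - 1)/(q^{s+1} - 1)` linear subspaces of `𝔽_q^{m+1}`, each of
dimension `s + 1`, such that every nonzero vector lies in exactly one member. -/
theorem stmt_9 (q s m : ℕ) (hs : 1 ≤ s) (hm : 1 ≤ m) (hdvd : (s + 1) ∣ (m + 1))
    (F : Type) [Field F] [Fintype F] (hF : Fintype.card F = q) :
    ∃ 𝒮 : Finset (Submodule F (Fin (m + 1) → F)),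
      (∀ W ∈ 𝒮, Module.finrank F W = s + 1) ∧
      𝒮.card = (q ^ (m + 1) - 1) / (q ^ (s + 1) - 1) ∧
      (∀ x : Fin (m + 1) → F, x ≠ 0 → ∃! W, W ∈ 𝒮 ∧ x ∈ W) :=
  stmt_9_general q s m hdvd F hF
end

section
/- Let q = 2ᵗ with t ≥ 1, let 𝔽_q be a finite field of order q, and let H be the point-by-line incidence matrix over 𝔽₂ of AG₁(2,q), with rows indexed by the vectors of 𝔽_q² and columns indexed by the affine lines of 𝔽_q² (cosets of 1-dimensional subspaces). Then the rank of Hᵀ·H over 𝔽₂ equals q = 2ᵗ. -/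
/-!
Over `𝔽₂`, the `(ℓ, ℓ')` entry of `Hᵀ H` is the parity of `|ℓ ∩ ℓ'|`. Since `q` is even, a line
meets itself and its parallels in an even number of points and every other line in exactly one,
so `Hᵀ H` is the matrix `J - I` of the complete graph on the `q + 1` directions (points of the
projective line), pulled back along the surjective map sending a line to its direction. Such a
pullback has the same rank, and as `q + 1 = 1` in `𝔽₂` the kernel of `J - I` is exactly the
constant vectors, so its rank is `(q + 1) - 1 = q`.
-/

open scoped Classical

/-- The lines of the affine geometry design `AG₁(m, q)`: cosets of the one-dimensional
linear subspaces of `𝔽_q^m`. -/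
def AffineLine (F : Type) [Field F] (m : ℕ) : Type :=
  {ℓ : Set (Fin m → F) // ∃ (W : Submodule F (Fin m → F)) (a : Fin m → F),
    Module.finrank F W = 1 ∧ ℓ = (a + ·) '' (W : Set (Fin m → F))}

noncomputable instance (F : Type) [Field F] [Fintype F] (m : ℕ) :
    Fintype (AffineLine F m) := by
  unfold AffineLine; exact Fintype.ofFinite _

namespace Matrix

theorem rank_submatrix_of_surjective {m n m₀ n₀ R : Type*} [CommRing R] [StrongRankCondition R]
    [Fintype n] [Fintype n₀] (A : Matrix m n R) {r : m₀ → m} {c : n₀ → n}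
    (hr : Function.Surjective r) (hc : Function.Surjective c) :
    (A.submatrix r c).rank = A.rank := by
  refine le_antisymm (rank_submatrix_le A r c) ?_
  calc A.rank
      = ((A.submatrix r c).submatrix (Function.surjInv hr) (Function.surjInv hc)).rank := by simp
    _ ≤ (A.submatrix r c).rank := rank_submatrix_le _ _ _

theorem transpose_mul_self_apply_of_indicator {P B R : Type*} [Fintype P] [Semiring R]
    (S : B → Set P) (H : Matrix P B R) (hH : ∀ p b, H p b = if p ∈ S b then 1 else 0)
    (b b' : B) : (Hᵀ * H) b b' = ((S b ∩ S b').ncard : R) := by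
  simp only [mul_apply, transpose_apply, hH, ite_mul, one_mul, zero_mul, ← ite_and,
    ← Set.mem_inter_iff]
  rw [Finset.sum_boole, Set.ncard_eq_toFinset_card', Set.toFinset_card, Fintype.card_subtype]

end Matrix

namespace SimpleGraph
open Matrix

theorem rank_adjMatrix_completeGraph {V K : Type*} [Fintype V] [Field K]
    (hcard : (Fintype.card V : K) = 1) :
    ((completeGraph V).adjMatrix K).rank = Fintype.card V - 1 := by
  have : Nonempty V := Fintype.card_pos_iff.mp <| Nat.pos_of_ne_zero fun h0 => by
    simp [h0] at hcard
  set A := (completeGraph V).adjMatrix K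
  have hmul : ∀ x i, (A *ᵥ x) i = ∑ j, x j - x i := by
    intro x i
    rw [adjMatrix_mulVec_apply, neighborFinset_top, ← Finset.sum_compl_add_sum {i},
      Finset.sum_singleton, add_sub_cancel_right]
  have hker : LinearMap.ker A.mulVecLin = Submodule.span K {Function.const V 1} := by
    ext x
    rw [LinearMap.mem_ker, Submodule.mem_span_singleton]
    constructor
    · intro hx
      refine ⟨∑ j, x j, funext fun i => ?_⟩
      have := congrFun hx i
      rw [mulVecLin_apply, hmul, Pi.zero_apply, sub_eq_zero] at this
      simp [this]
    · rintro ⟨c, rfl⟩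
      funext i
      simp [hmul, hcard]
  have := LinearMap.finrank_range_add_finrank_ker A.mulVecLin
  rw [hker, finrank_span_singleton (by simp), Module.finrank_fintype_fun_eq_card] at this
  rw [rank]; omega

end SimpleGraph

open Module
open scoped LinearAlgebra.Projectivization

theorem AffineSubspace.coe_mk'_eq_image_add {k V : Type*} [Ring k] [AddCommGroup V]
    [Module k V] (a : V) (W : Submodule k V) :
    (AffineSubspace.mk' a W : Set V) = (a + ·) '' W := by
  ext x
  simp only [SetLike.mem_coe, AffineSubspace.mem_mk', vsub_eq_sub, Set.mem_image]
  exact ⟨fun hx => ⟨x - a, hx, add_sub_cancel a x⟩, by rintro ⟨w, hw, rfl⟩; simpa using hw⟩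

theorem Projectivization.isCompl_submodule_of_ne {K V : Type*} [DivisionRing K] [AddCommGroup V]
    [Module K V] [FiniteDimensional K V] (hV : finrank K V = 2) {u v : ℙ K V} (h : u ≠ v) :
    IsCompl u.submodule v.submodule := by
  rw [Submodule.isCompl_iff_disjoint _ _ (by simp [hV, finrank_submodule])]
  have hatom : ∀ w : ℙ K V, IsAtom w.submodule := fun w =>
    Submodule.isAtom_iff_finrank_eq_one.mpr w.finrank_submodule
  exact (hatom u).disjoint_of_ne (hatom v) (submodule_injective.ne h)

namespace AffineLine

variable {F : Type} [Field F] {m : ℕ}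

noncomputable def toAffineSubspace (ℓ : AffineLine F m) : AffineSubspace F (Fin m → F) :=
  affineSpan F ℓ.1

theorem toAffineSubspace_eq_mk' {ℓ : AffineLine F m} {W : Submodule F (Fin m → F)}
    {a : Fin m → F} (h : ℓ.1 = (a + ·) '' W) : ℓ.toAffineSubspace = .mk' a W := by
  rw [toAffineSubspace, h, ← AffineSubspace.coe_mk'_eq_image_add, AffineSubspace.affineSpan_coe]

@[simp]
theorem coe_toAffineSubspace (ℓ : AffineLine F m) : (ℓ.toAffineSubspace : Set _) = ℓ.1 := by
  obtain ⟨W, a, -, h⟩ := ℓ.2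
  rw [toAffineSubspace_eq_mk' h, AffineSubspace.coe_mk'_eq_image_add, h]

theorem finrank_direction (ℓ : AffineLine F m) :
    finrank F ℓ.toAffineSubspace.direction = 1 := by
  obtain ⟨W, a, hW, h⟩ := ℓ.2
  rwa [toAffineSubspace_eq_mk' h, AffineSubspace.direction_mk']

noncomputable def direction (ℓ : AffineLine F m) : ℙ F (Fin m → F) :=
  .mk'' _ ℓ.finrank_direction

@[simp]
theorem submodule_direction (ℓ : AffineLine F m) :
    ℓ.direction.submodule = ℓ.toAffineSubspace.direction :=
  Projectivization.submodule_mk'' _ _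

def ofDirection (d : ℙ F (Fin m → F)) : AffineLine F m :=
  ⟨d.submodule, d.submodule, 0, d.finrank_submodule, by simp⟩

theorem direction_surjective : Function.Surjective (direction : AffineLine F m → _) := by
  intro d
  refine ⟨ofDirection d, Projectivization.submodule_injective ?_⟩
  rw [submodule_direction, toAffineSubspace_eq_mk' (W := d.submodule) (a := 0)
    (by simp [ofDirection]), AffineSubspace.direction_mk']

theorem nonempty (ℓ : AffineLine F m) : ℓ.1.Nonempty := by
  obtain ⟨W, a, -, h⟩ := ℓ.2
  exact h ▸ ⟨a, 0, W.zero_mem, add_zero a⟩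

theorem ncard [Fintype F] (ℓ : AffineLine F m) : ℓ.1.ncard = Fintype.card F := by
  obtain ⟨W, a, hW, h⟩ := ℓ.2
  rw [h, Set.ncard_image_of_injective _ (add_right_injective a), ← Nat.card_coe_set_eq,
    SetLike.coe_sort_coe, Nat.card_eq_fintype_card, Module.card_eq_pow_finrank (K := F), hW,
    pow_one]

theorem inter_eq_empty_of_direction_eq {ℓ ℓ' : AffineLine F m}
    (hd : ℓ.direction = ℓ'.direction) (hne : ℓ ≠ ℓ') : ℓ.1 ∩ ℓ'.1 = ∅ := by
  rw [← Set.not_nonempty_iff_eq_empty]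
  intro hi
  apply hne
  have hsub : ℓ.toAffineSubspace = ℓ'.toAffineSubspace :=
    AffineSubspace.ext_of_direction_eq (by simpa using congrArg Projectivization.submodule hd)
      (by simpa using hi)
  exact Subtype.ext (by simpa using SetLike.ext'_iff.mp hsub)

theorem exists_inter_eq_singleton_of_direction_ne {ℓ ℓ' : AffineLine F 2}
    (hd : ℓ.direction ≠ ℓ'.direction) : ∃ p, ℓ.1 ∩ ℓ'.1 = {p} := by
  have hc := Projectivization.isCompl_submodule_of_ne (by simp) hd
  simp only [submodule_direction] at hc
  simpa using AffineSubspace.inter_eq_singleton_of_nonempty_of_isCompl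
    (by simpa using ℓ.nonempty) (by simpa using ℓ'.nonempty) hc

theorem cast_ncard_inter {R : Type*} [Semiring R] [Fintype F]
    (hq : (Fintype.card F : R) = 0) (ℓ ℓ' : AffineLine F 2) :
    ((ℓ.1 ∩ ℓ'.1).ncard : R) = if ℓ.direction = ℓ'.direction then 0 else 1 := by
  split_ifs with hd
  · by_cases he : ℓ = ℓ'
    · rw [he, Set.inter_self, ncard, hq]
    · rw [inter_eq_empty_of_direction_eq hd he, Set.ncard_empty, Nat.cast_zero]
  · obtain ⟨p, hp⟩ := exists_inter_eq_singleton_of_direction_ne hd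
    rw [hp, Set.ncard_singleton, Nat.cast_one]

end AffineLine

/-- for `q = 2ᵗ`, the point-by-line incidence matrix `H` over `𝔽₂` of
`AG₁(2, q)` satisfies `rank(Hᵀ · H) = q = 2ᵗ` over `𝔽₂`. -/
theorem stmt_10 (t : ℕ) (ht : 1 ≤ t)
    (F : Type) [Field F] [Fintype F] (hF : Fintype.card F = 2 ^ t)
    (H : Matrix (Fin 2 → F) (AffineLine F 2) (ZMod 2))
    (hH : ∀ p ℓ, H p ℓ = if p ∈ ℓ.1 then 1 else 0) :
    (H.transpose * H).rank = 2 ^ t := by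
  let _ : Fintype (ℙ F (Fin 2 → F)) := Fintype.ofFinite _
  have hq : (Fintype.card F : ZMod 2) = 0 := by
    rw [hF, ZMod.natCast_eq_zero_iff]
    exact dvd_pow_self 2 (by omega)
  have hdirs : Fintype.card (ℙ F (Fin 2 → F)) = Fintype.card F + 1 := by
    rw [← Nat.card_eq_fintype_card, Projectivization.card_of_finrank_two _ _ (by simp),
      Nat.card_eq_fintype_card]
  have hHH : H.transpose * H = ((SimpleGraph.completeGraph _).adjMatrix (ZMod 2)).submatrix
      AffineLine.direction AffineLine.direction := by
    ext ℓ ℓ'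
    rw [Matrix.transpose_mul_self_apply_of_indicator _ H hH, AffineLine.cast_ncard_inter hq]
    simp
  rw [hHH, Matrix.rank_submatrix_of_surjective _ AffineLine.direction_surjective
    AffineLine.direction_surjective, SimpleGraph.rank_adjMatrix_completeGraph
    (by rw [hdirs, Nat.cast_succ, hq, zero_add]), hdirs, Nat.add_sub_cancel, hF]
end

section
/- Let q be a prime power, 𝔽_q a finite field of order q, and m ≥ 2. Consider the binary linear code whose codewords are the functions x from the set of lines of EG₁(m,q) (cosets of 1-dimensional subspaces of 𝔽_q^m not containing the zero vector) to 𝔽₂ such that for every nonzero vector p of 𝔽_q^m, the sum over all such lines ℓ containing p of x(ℓ) is 0 in 𝔽₂ (i.e., the code with parity-check matrix the point-by-line incidence matrix of EG₁(m,q)). Then the minimum distance of this code equals q+1 if q is even, and equals 2q if q is odd and m ≥ 3. -/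
open scoped Classical

section LineSet
variable (F : Type) [Field F] {V : Type} [AddCommGroup V] [Module F V]

/-- The affine line through `a` with direction `b`. -/
def lineSet (a b : V) : Set V := Set.range fun t : F => a + t • b

variable {F}

lemma mem_lineSet {a b p : V} : p ∈ lineSet F a b ↔ ∃ t : F, a + t • b = p := Iff.rfl

lemma base_mem_lineSet (a b : V) : a ∈ lineSet F a b := ⟨0, by simp⟩

lemma param_mem_lineSet (a b : V) (t : F) : a + t • b ∈ lineSet F a b := ⟨t, rfl⟩

lemma lineSet_rebase {a b p : V} (hp : p ∈ lineSet F a b) :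
    lineSet F p b = lineSet F a b := by
  obtain ⟨s, rfl⟩ := hp
  ext v
  constructor
  · rintro ⟨t, rfl⟩; exact ⟨s + t, by module⟩
  · rintro ⟨t, rfl⟩; exact ⟨t - s, by module⟩

lemma lineSet_smul {a b : V} {c : F} (hc : c ≠ 0) :
    lineSet F a (c • b) = lineSet F a b := by
  ext v
  constructor
  · rintro ⟨t, rfl⟩; exact ⟨t * c, by module⟩
  · rintro ⟨t, rfl⟩
    refine ⟨t / c, ?_⟩
    show a + (t / c) • c • b = a + t • b
    rw [smul_smul, div_mul_cancel₀ _ hc]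

lemma lineSet_two_point {a b p r : V} (hb : b ≠ 0) (hp : p ∈ lineSet F a b)
    (hr : r ∈ lineSet F a b) (hpr : p ≠ r) :
    lineSet F a b = lineSet F p (r - p) := by
  rw [← lineSet_rebase hp] at hr ⊢
  obtain ⟨t, ht⟩ := hr
  have htne : t ≠ 0 := by
    rintro rfl
    simp only [zero_smul, add_zero] at ht
    exact hpr ht
  have hrp : r - p = t • b := by
    rw [← ht]; show p + t • b - p = t • b; abel
  rw [hrp, lineSet_smul htne]

/-- Two distinct points lie on at most one line. -/
lemma lineSet_unique {a b c d p r : V} (hb : b ≠ 0) (hd : d ≠ 0)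
    (hp1 : p ∈ lineSet F a b) (hr1 : r ∈ lineSet F a b)
    (hp2 : p ∈ lineSet F c d) (hr2 : r ∈ lineSet F c d) (hpr : p ≠ r) :
    lineSet F a b = lineSet F c d := by
  rw [lineSet_two_point hb hp1 hr1 hpr, lineSet_two_point hd hp2 hr2 hpr]

lemma lineSet_inj_param {b : V} (hb : b ≠ 0) {a : V} {t t' : F}
    (h : a + t • b = a + t' • b) : t = t' := by
  have h2 : (t - t') • b = 0 := by
    rw [sub_smul]
    have := sub_eq_zero_of_eq h
    calc t • b - t' • b = a + t • b - (a + t' • b) := by abel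
    _ = 0 := this
  rcases smul_eq_zero.1 h2 with h3 | h3
  · exact sub_eq_zero.1 h3
  · exact absurd h3 hb

/-- The direction of a line is determined up to scalar. -/
lemma lineSet_dir {a b c d : V} (hb : b ≠ 0) (hd : d ≠ 0)
    (h : lineSet F a b = lineSet F c d) : ∃ k : F, k ≠ 0 ∧ d = k • b := by
  have hc : c ∈ lineSet F a b := h ▸ base_mem_lineSet c d
  have hcd : c + d ∈ lineSet F a b := h ▸ (show c + d ∈ lineSet F c d from ⟨1, show c + (1:F) • d = c + d by rw [one_smul]⟩)
  rw [← lineSet_rebase hc] at hcd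
  obtain ⟨t, ht⟩ := hcd
  have : d = t • b := by
    have := ht
    have h' : t • b = d := by
      have := congrArg (· - c) ht
      simpa [add_sub_cancel_left] using this
    exact h'.symm
  refine ⟨t, ?_, this⟩
  rintro rfl
  rw [zero_smul] at this
  exact hd this

lemma lineSet_card [Fintype F] [Fintype V] {a b : V} (hb : b ≠ 0) :
    (lineSet F a b).toFinset.card = Fintype.card F := by
  rw [lineSet, Set.toFinset_range, Finset.card_image_of_injective _ ?_, Finset.card_univ]
  intro t t' h
  exact lineSet_inj_param hb h

end LineSet

/-- The lines of the incidence structure `EG₁(m, q)`: cosets of the one-dimensional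
linear subspaces of `𝔽_q^m` that do not contain the zero vector. -/
def EGLine (F : Type) [Field F] (m : ℕ) : Type :=
  {ℓ : Set (Fin m → F) // (∃ (W : Submodule F (Fin m → F)) (a : Fin m → F),
    Module.finrank F W = 1 ∧ ℓ = (a + ·) '' (W : Set (Fin m → F))) ∧ (0 : Fin m → F) ∉ ℓ}

section EG
variable {F : Type} [Field F] {m : ℕ}

noncomputable instance [Fintype F] : Fintype (EGLine F m) := by
  have : Finite (EGLine F m) := by unfold EGLine; exact Subtype.finite
  exact Fintype.ofFinite _

lemma egline_zero_notMem (ℓ : EGLine F m) : (0 : Fin m → F) ∉ ℓ.1 := ℓ.2.2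

lemma egline_repr (ℓ : EGLine F m) : ∃ a b : Fin m → F, b ≠ 0 ∧ ℓ.1 = lineSet F a b := by
  obtain ⟨⟨W, a, hrank, heq⟩, -⟩ := ℓ.2
  have hWbot : W ≠ ⊥ := by
    intro h
    rw [h] at hrank
    simp at hrank
  obtain ⟨b, hbW, hb⟩ := Submodule.exists_mem_ne_zero_of_ne_bot hWbot
  have hspan : Submodule.span F {b} = W := by
    apply Submodule.eq_of_le_of_finrank_eq
    · rw [Submodule.span_singleton_le_iff_mem]; exact hbW
    · rw [hrank, finrank_span_singleton hb]
  refine ⟨a, b, hb, ?_⟩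
  rw [heq, ← hspan]
  ext v
  simp only [Set.mem_image, SetLike.mem_coe, Submodule.mem_span_singleton]
  constructor
  · rintro ⟨w, ⟨t, rfl⟩, rfl⟩; exact ⟨t, rfl⟩
  · rintro ⟨t, rfl⟩; exact ⟨t • b, ⟨t, rfl⟩, rfl⟩

noncomputable def eglineMk (a b : Fin m → F) (hb : b ≠ 0)
    (h0 : (0 : Fin m → F) ∉ lineSet F a b) : EGLine F m :=
  ⟨lineSet F a b, ⟨⟨Submodule.span F {b}, a, finrank_span_singleton hb, by
    ext v
    simp only [Set.mem_image, SetLike.mem_coe, Submodule.mem_span_singleton]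
    constructor
    · rintro ⟨t, rfl⟩; exact ⟨t • b, ⟨t, rfl⟩, rfl⟩
    · rintro ⟨w, ⟨t, rfl⟩, rfl⟩; exact ⟨t, rfl⟩⟩, h0⟩⟩

@[simp] lemma eglineMk_coe (a b : Fin m → F) (hb : b ≠ 0) (h0 : (0 : Fin m → F) ∉ lineSet F a b) :
    (eglineMk a b hb h0).1 = lineSet F a b := rfl

end EG

section Code
variable {F : Type} [Field F] [Fintype F] {m : ℕ}

/-- The support of a codeword, as a `Finset`. -/
noncomputable def Scode (x : EGLine F m → ZMod 2) : Finset (EGLine F m) :=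
  Finset.univ.filter (fun ℓ => x ℓ ≠ 0)

lemma scode_supp (x : EGLine F m → ZMod 2) : {ℓ | x ℓ ≠ 0} = ↑(Scode x) := by
  ext ℓ; simp [Scode]

lemma finsum_pencil (x : EGLine F m → ZMod 2) (p : Fin m → F) :
    ∑ᶠ ℓ ∈ {ℓ : EGLine F m | p ∈ ℓ.1}, x ℓ
      = ((((Scode x).filter (fun ℓ => p ∈ ℓ.1)).card : ℕ) : ZMod 2) := by
  have h1 : {ℓ : EGLine F m | p ∈ ℓ.1}
      = ↑(Finset.univ.filter (fun ℓ : EGLine F m => p ∈ ℓ.1)) := by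
    ext ℓ; simp
  rw [h1, finsum_mem_coe_finset]
  rw [← Finset.sum_filter_ne_zero]
  have h2 : (Finset.univ.filter (fun ℓ : EGLine F m => p ∈ ℓ.1)).filter (fun ℓ => x ℓ ≠ 0)
      = (Scode x).filter (fun ℓ => p ∈ ℓ.1) := by
    rw [Scode, Finset.filter_filter, Finset.filter_filter]
    apply Finset.filter_congr
    intro ℓ _
    simp [and_comm]
  rw [h2]
  have h3 : ∀ ℓ ∈ (Scode x).filter (fun ℓ => p ∈ ℓ.1), x ℓ = 1 := by
    intro ℓ hℓ
    simp only [Scode, Finset.mem_filter, Finset.mem_univ, true_and] at hℓ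
    have h4 : ∀ a : ZMod 2, a ≠ 0 → a = 1 := by decide
    exact h4 _ hℓ.1
  rw [Finset.sum_congr rfl h3, Finset.sum_const, nsmul_eq_mul, mul_one]

lemma even_iff_zmod (n : ℕ) : ((n : ZMod 2) = 0) ↔ Even n := by
  rw [ZMod.natCast_eq_zero_iff, Nat.even_iff, Nat.dvd_iff_mod_eq_zero]

/-- The code condition is equivalent to all pencils being even. -/
lemma code_iff (x : EGLine F m → ZMod 2) :
    (∀ p : Fin m → F, p ≠ 0 → ∑ᶠ ℓ ∈ {ℓ : EGLine F m | p ∈ ℓ.1}, x ℓ = 0)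
      ↔ ∀ p : Fin m → F, Even (((Scode x).filter (fun ℓ => p ∈ ℓ.1)).card) := by
  constructor
  · intro h p
    by_cases hp : p = 0
    · subst hp
      have : (Scode x).filter (fun ℓ => (0 : Fin m → F) ∈ ℓ.1) = ∅ := by
        apply Finset.filter_false_of_mem
        intro ℓ _
        exact egline_zero_notMem ℓ
      rw [this]; simp
    · have := h p hp
      rw [finsum_pencil] at this
      exact (even_iff_zmod _).1 this
  · intro h p _
    rw [finsum_pencil]
    exact (even_iff_zmod _).2 (h p)

omit [Fintype F] in
/-- There is a second line through every point of a line of an even configuration. -/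
lemma partner_exists (S : Finset (EGLine F m))
    (hdeg : ∀ p : Fin m → F, Even ((S.filter (fun ℓ => p ∈ ℓ.1)).card))
    {ℓ : EGLine F m} (hℓ : ℓ ∈ S) {p : Fin m → F} (hp : p ∈ ℓ.1) :
    ∃ ℓ' ∈ S, ℓ' ≠ ℓ ∧ p ∈ ℓ'.1 := by
  have h1 : ℓ ∈ S.filter (fun ℓ => p ∈ ℓ.1) := Finset.mem_filter.2 ⟨hℓ, hp⟩
  have h2 : 1 < (S.filter (fun ℓ => p ∈ ℓ.1)).card := by
    rcases hdeg p with ⟨k, hk⟩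
    have : 0 < (S.filter (fun ℓ => p ∈ ℓ.1)).card := Finset.card_pos.2 ⟨ℓ, h1⟩
    omega
  obtain ⟨ℓ', hℓ', hne⟩ := Finset.exists_mem_ne h2 ℓ
  rw [Finset.mem_filter] at hℓ'
  exact ⟨ℓ', hℓ'.1, hne, hℓ'.2⟩

/-- Lower bound `q+1` for nonempty even configurations. -/
lemma lb1 (S : Finset (EGLine F m)) (hne : S.Nonempty)
    (hdeg : ∀ p : Fin m → F, Even ((S.filter (fun ℓ => p ∈ ℓ.1)).card)) :
    Fintype.card F + 1 ≤ S.card := by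
  obtain ⟨ℓ0, hℓ0⟩ := hne
  obtain ⟨a, b, hb, heq⟩ := egline_repr ℓ0
  have H : ∀ t : F, ∃ ℓ' ∈ S, ℓ' ≠ ℓ0 ∧ (a + t • b) ∈ ℓ'.1 := by
    intro t
    exact partner_exists S hdeg hℓ0 (by rw [heq]; exact param_mem_lineSet a b t)
  choose g hg1 hg2 hg3 using H
  have hinj : Set.InjOn g ↑(Finset.univ : Finset F) := by
    intro t _ t' _ hgt
    by_contra htt
    have hptne : a + t • b ≠ a + t' • b := fun h => htt (lineSet_inj_param hb h)
    obtain ⟨c, d, hd, heq'⟩ := egline_repr (g t)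
    have e1 : (g t).1 = ℓ0.1 := by
      rw [heq', heq]
      refine (lineSet_unique hd hb ?_ ?_ ?_ ?_ hptne).symm.symm
      · rw [← heq']; exact hg3 t
      · rw [← heq']; rw [hgt]; exact hg3 t'
      · rw [← heq]; rw [heq]; exact param_mem_lineSet a b t
      · rw [heq] at *; exact param_mem_lineSet a b t'
    exact hg2 t (Subtype.ext e1)
  have hmap : ∀ t ∈ (Finset.univ : Finset F), g t ∈ S.erase ℓ0 := by
    intro t _
    exact Finset.mem_erase.2 ⟨hg2 t, hg1 t⟩
  have hcard : Fintype.card F ≤ (S.erase ℓ0).card := by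
    rw [← Finset.card_univ]
    exact Finset.card_le_card_of_injOn g hmap hinj
  have h1 : 0 < S.card := Finset.card_pos.2 ⟨ℓ0, hℓ0⟩
  rw [Finset.card_erase_of_mem hℓ0] at hcard
  omega

end Code

section P2
variable {F : Type} [Field F] {m : ℕ} (i0 i1 : Fin m) (hne : i0 ≠ i1)

/-- A point of the coordinate plane spanned by coordinates `i0, i1`. -/
def P2 (X Y : F) : Fin m → F := fun j => if j = i0 then X else if j = i1 then Y else 0

variable {i0 i1}

lemma P2_i0 (X Y : F) : P2 i0 i1 X Y i0 = X := by simp [P2]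

lemma P2_i1 (hne : i0 ≠ i1) (X Y : F) : P2 i0 i1 X Y i1 = Y := by
  simp [P2, (Ne.symm hne)]

lemma P2_other (X Y : F) {j : Fin m} (h0 : j ≠ i0) (h1 : j ≠ i1) : P2 i0 i1 X Y j = 0 := by
  simp [P2, h0, h1]

lemma P2_add_smul (hne : i0 ≠ i1) (X Y X' Y' t : F) :
    P2 i0 i1 X Y + t • P2 i0 i1 X' Y' = P2 i0 i1 (X + t * X') (Y + t * Y') := by
  funext j
  by_cases h0 : j = i0
  · subst h0; simp [P2, hne]
  · by_cases h1 : j = i1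
    · subst h1; simp [P2, h0, Ne.symm hne]
    · simp [P2, h0, h1]

lemma P2_inj (hne : i0 ≠ i1) {X Y X' Y' : F} (h : P2 i0 i1 X Y = P2 i0 i1 X' Y') :
    X = X' ∧ Y = Y' := by
  constructor
  · have := congrFun h i0; simpa [P2_i0] using this
  · have := congrFun h i1; simpa [P2_i1 hne] using this

lemma P2_eq_zero_iff (hne : i0 ≠ i1) {X Y : F} : P2 i0 i1 X Y = 0 ↔ X = 0 ∧ Y = 0 := by
  constructor
  · intro h
    exact P2_inj hne (by rw [h]; funext j; simp [P2])
  · rintro ⟨rfl, rfl⟩; funext j; simp [P2]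

lemma mem_lineSet_P2 (hne : i0 ≠ i1) {X Y X' Y' : F} {p : Fin m → F} :
    p ∈ lineSet F (P2 i0 i1 X Y) (P2 i0 i1 X' Y') ↔
      ∃ t : F, P2 i0 i1 (X + t * X') (Y + t * Y') = p := by
  rw [mem_lineSet]
  constructor
  · rintro ⟨t, rfl⟩; exact ⟨t, (P2_add_smul hne _ _ _ _ _).symm⟩
  · rintro ⟨t, rfl⟩; exact ⟨t, P2_add_smul hne _ _ _ _ _⟩

lemma mem_P2_line_shape (hne : i0 ≠ i1) {X Y X' Y' : F} {p : Fin m → F}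
    (hp : p ∈ lineSet F (P2 i0 i1 X Y) (P2 i0 i1 X' Y')) :
    p = P2 i0 i1 (p i0) (p i1) := by
  rw [mem_lineSet_P2 hne] at hp
  obtain ⟨t, ht⟩ := hp
  rw [← ht, P2_i0, P2_i1 hne]

end P2

section EvenCons
variable {F : Type} [Field F] [Fintype F] {m : ℕ} {i0 i1 : Fin m}

lemma char2_sq_inj (h2 : (2:F) = 0) : Function.Injective (fun t : F => t * t) := by
  intro t s h
  simp only at h
  have h3 : (t - s) * (t - s) = 0 := by linear_combination h + (s*s - t*s) * h2
  exact sub_eq_zero.mp (mul_self_eq_zero.mp h3)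

/-- The hyperoval-type configuration of `q+1` lines for even `q`. -/
lemma even_config (hne : i0 ≠ i1) (h2 : (2:F) = 0) (c : F) (hc : ∀ t : F, t*t + t ≠ c) :
    ∃ 𝒮 : Finset (EGLine F m), 𝒮.Nonempty ∧ 𝒮.card = Fintype.card F + 1 ∧
      ∀ p : Fin m → F, Even ((𝒮.filter (fun ℓ => p ∈ ℓ.1)).card) := by
  have hd1 : P2 i0 i1 (0:F) 1 ≠ 0 := fun h => one_ne_zero ((P2_eq_zero_iff hne).1 h).2
  have hdt : ∀ t : F, P2 i0 i1 (1:F) t ≠ 0 := fun t h => one_ne_zero ((P2_eq_zero_iff hne).1 h).1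
  have hzero : (0 : Fin m → F) = P2 i0 i1 0 0 := ((P2_eq_zero_iff hne).2 ⟨rfl, rfl⟩).symm
  have hVmem : ∀ X Y : F, P2 i0 i1 X Y ∈ lineSet F (P2 i0 i1 1 0) (P2 i0 i1 0 1) ↔ X = 1 := by
    intro X Y
    rw [mem_lineSet_P2 hne]
    constructor
    · rintro ⟨t, ht⟩
      have h' := (P2_inj hne ht).1
      linear_combination -h'
    · rintro rfl
      exact ⟨Y, by rw [show (1:F) + Y * 0 = 1 by ring, show (0:F) + Y * 1 = Y by ring]⟩
  have hLmem : ∀ t X Y : F, P2 i0 i1 X Y ∈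
      lineSet F (P2 i0 i1 0 (t*t + t + c)) (P2 i0 i1 1 t) ↔ Y = t*t + t + c + X * t := by
    intro t X Y
    rw [mem_lineSet_P2 hne]
    constructor
    · rintro ⟨s, hs⟩
      obtain ⟨h1, h3⟩ := P2_inj hne hs
      rw [← h3, ← h1]
      ring
    · intro h
      exact ⟨X, by rw [show (0:F) + X * 1 = X by ring,
        show t*t + t + c + X * t = Y from h.symm]⟩
  have hV0 : (0 : Fin m → F) ∉ lineSet F (P2 i0 i1 (1:F) 0) (P2 i0 i1 0 1) := by
    rw [hzero, hVmem]
    exact fun h => one_ne_zero h.symm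
  have hL0 : ∀ t : F, (0 : Fin m → F) ∉ lineSet F (P2 i0 i1 0 (t*t+t+c)) (P2 i0 i1 1 t) := by
    intro t
    rw [hzero, hLmem]
    intro h
    exact hc t (by linear_combination -h - c*h2)
  set VE : EGLine F m := eglineMk _ _ hd1 hV0 with hVE
  set LE : F → EGLine F m := fun t => eglineMk _ _ (hdt t) (hL0 t) with hLE
  have hVEc : VE.1 = lineSet F (P2 i0 i1 1 0) (P2 i0 i1 0 1) := rfl
  have hLEc : ∀ t, (LE t).1 = lineSet F (P2 i0 i1 0 (t*t+t+c)) (P2 i0 i1 1 t) := fun t => rfl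
  have hLbase : ∀ t : F, P2 i0 i1 0 (t*t+t+c) ∈ (LE t).1 := by
    intro t; rw [hLEc]; exact base_mem_lineSet _ _
  have hLEinj : Function.Injective LE := by
    intro t t' h
    have hb : P2 i0 i1 (0:F) (t*t+t+c) ∈ (LE t').1 := by rw [← h]; exact hLbase t
    rw [hLEc, hLmem] at hb
    have hb' : t*t + t = t'*t' + t' := by linear_combination hb
    have hp2 : P2 i0 i1 (1:F) (t*t+t+c+t) ∈ (LE t).1 := by rw [hLEc, hLmem]; ring_nf
    rw [h, hLEc, hLmem] at hp2
    linear_combination hp2 - hb'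
  have hVnotL : ∀ t : F, VE ≠ LE t := by
    intro t h
    have hb : P2 i0 i1 (0:F) (t*t+t+c) ∈ VE.1 := by rw [h]; exact hLbase t
    rw [hVEc, hVmem] at hb
    exact one_ne_zero hb.symm
  refine ⟨insert VE (Finset.image LE Finset.univ), ⟨VE, Finset.mem_insert_self _ _⟩, ?_, ?_⟩
  · rw [Finset.card_insert_of_notMem, Finset.card_image_of_injective _ hLEinj,
      Finset.card_univ]
    intro h
    obtain ⟨t, -, ht⟩ := Finset.mem_image.1 h
    exact hVnotL t ht.symm
  · intro p
    by_cases hout : ∃ j : Fin m, j ≠ i0 ∧ j ≠ i1 ∧ p j ≠ 0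
    · obtain ⟨j, hj0, hj1, hj⟩ := hout
      have hemp : (insert VE (Finset.image LE Finset.univ)).filter (fun ℓ => p ∈ ℓ.1) = ∅ := by
        apply Finset.filter_false_of_mem
        intro ℓ hℓ hp
        rcases Finset.mem_insert.1 hℓ with rfl | hℓ'
        · rw [hVEc] at hp
          exact hj (by rw [mem_P2_line_shape hne hp, P2_other _ _ hj0 hj1])
        · obtain ⟨t, -, rfl⟩ := Finset.mem_image.1 hℓ'
          rw [hLEc] at hp
          exact hj (by rw [mem_P2_line_shape hne hp, P2_other _ _ hj0 hj1])
      rw [hemp]; simp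
    · push_neg at hout
      have hP : p = P2 i0 i1 (p i0) (p i1) := by
        funext j
        by_cases hj0 : j = i0
        · subst hj0; rw [P2_i0]
        · by_cases hj1 : j = i1
          · subst hj1; rw [P2_i1 hne]
          · rw [P2_other _ _ hj0 hj1]; exact hout j hj0 hj1
      set X := p i0 with hXdef
      set Y := p i1 with hYdef
      by_cases hX : X = 1
      · obtain ⟨t0, ht0⟩ : ∃ t0 : F, t0 * t0 = Y + c :=
          (Finite.injective_iff_surjective.1 (char2_sq_inj h2)) (Y + c)
        have hfil : (insert VE (Finset.image LE Finset.univ)).filter (fun ℓ => p ∈ ℓ.1)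
            = {VE, LE t0} := by
          ext ℓ
          simp only [Finset.mem_filter, Finset.mem_insert, Finset.mem_singleton,
            Finset.mem_image, Finset.mem_univ, true_and]
          constructor
          · rintro ⟨rfl | ⟨t, rfl⟩, hp⟩
            · exact Or.inl rfl
            · right
              rw [hP, hLEc, hLmem, hX] at hp
              have hq' : t * t = t0 * t0 := by
                rw [ht0]; linear_combination -hp + (-t - c) * h2
              exact congrArg LE (char2_sq_inj h2 hq')
          · rintro (rfl | rfl)
            · exact ⟨Or.inl rfl, by rw [hP, hVEc, hVmem]; exact hX⟩
            · refine ⟨Or.inr ⟨t0, rfl⟩, ?_⟩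
              rw [hP, hLEc, hLmem, hX]
              linear_combination -ht0 + (-t0 - c) * h2
        rw [hfil, Finset.card_insert_of_notMem (by simpa using hVnotL t0),
          Finset.card_singleton]
        exact ⟨1, rfl⟩
      · have he : X + 1 ≠ 0 := by
          intro h
          exact hX (by linear_combination h - h2)
        have hfil : (insert VE (Finset.image LE Finset.univ)).filter (fun ℓ => p ∈ ℓ.1)
            = Finset.image LE (Finset.univ.filter (fun t : F => t*t + (X+1)*t = Y + c)) := by
          ext ℓ
          simp only [Finset.mem_filter, Finset.mem_insert, Finset.mem_image,
            Finset.mem_univ, true_and]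
          constructor
          · rintro ⟨rfl | ⟨t, rfl⟩, hp⟩
            · rw [hP, hVEc, hVmem] at hp
              exact absurd hp hX
            · refine ⟨t, ?_, rfl⟩
              rw [hP, hLEc, hLmem] at hp
              linear_combination -hp - c*h2
          · rintro ⟨t, ht, rfl⟩
            refine ⟨Or.inr ⟨t, rfl⟩, ?_⟩
            rw [hP, hLEc, hLmem]
            linear_combination -ht - c*h2
        rw [hfil, Finset.card_image_of_injective _ hLEinj]
        rcases Finset.eq_empty_or_nonempty
            (Finset.univ.filter (fun t : F => t*t + (X+1)*t = Y + c)) with hemp | ⟨t0, ht0⟩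
        · rw [hemp]; simp
        · have ht0' := (Finset.mem_filter.1 ht0).2
          have hsol : Finset.univ.filter (fun t : F => t*t + (X+1)*t = Y + c)
              = {t0, t0 + (X+1)} := by
            ext t
            simp only [Finset.mem_filter, Finset.mem_insert, Finset.mem_singleton,
              Finset.mem_univ, true_and]
            constructor
            · intro ht
              have hz : (t - t0) * (t + t0 + (X+1)) = 0 := by linear_combination ht - ht0'
              rcases mul_eq_zero.1 hz with hz1 | hz1
              · exact Or.inl (sub_eq_zero.1 hz1)
              · right
                linear_combination hz1 + (-t0 - X - 1) * h2
            · rintro (rfl | rfl)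
              · exact ht0'
              · linear_combination ht0' + ((X+1)*t0 + (X+1)*(X+1)) * h2
          rw [hsol, Finset.card_insert_of_notMem (by
            simp only [Finset.mem_singleton]
            intro h
            exact he (by linear_combination -h)), Finset.card_singleton]
          exact ⟨1, rfl⟩

end EvenCons

section OddCons
variable {F : Type} [Field F] [Fintype F] {m : ℕ} (i0 i1 i2 : Fin m)

/-- A point of the coordinate 3-space spanned by coordinates `i0, i1, i2`. -/
def P3 (X Y Z : F) : Fin m → F :=
  fun j => if j = i0 then X else if j = i1 then Y else if j = i2 then Z else 0

variable {i0 i1 i2}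
variable (h01 : i0 ≠ i1) (h02 : i0 ≠ i2) (h12 : i1 ≠ i2)

include h01 h02 h12 in
lemma P3_eval (X Y Z : F) :
    P3 i0 i1 i2 X Y Z i0 = X ∧ P3 i0 i1 i2 X Y Z i1 = Y ∧ P3 i0 i1 i2 X Y Z i2 = Z := by
  refine ⟨by simp [P3], ?_, ?_⟩
  · simp [P3, Ne.symm h01]
  · simp [P3, Ne.symm h02, Ne.symm h12]

lemma P3_other (X Y Z : F) {j : Fin m} (hj0 : j ≠ i0) (hj1 : j ≠ i1) (hj2 : j ≠ i2) :
    P3 i0 i1 i2 X Y Z j = 0 := by simp [P3, hj0, hj1, hj2]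

include h01 h02 h12 in
lemma P3_inj {X Y Z X' Y' Z' : F} (h : P3 i0 i1 i2 X Y Z = P3 i0 i1 i2 X' Y' Z') :
    X = X' ∧ Y = Y' ∧ Z = Z' := by
  obtain ⟨a1, a2, a3⟩ := P3_eval h01 h02 h12 (F := F) X Y Z
  obtain ⟨b1, b2, b3⟩ := P3_eval h01 h02 h12 (F := F) X' Y' Z'
  exact ⟨by rw [← a1, ← b1, h], by rw [← a2, ← b2, h], by rw [← a3, ← b3, h]⟩

include h01 h02 h12 in
lemma P3_add_smul (X Y Z X' Y' Z' t : F) :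
    P3 i0 i1 i2 X Y Z + t • P3 i0 i1 i2 X' Y' Z'
      = P3 i0 i1 i2 (X + t * X') (Y + t * Y') (Z + t * Z') := by
  funext j
  by_cases hj0 : j = i0
  · subst hj0; simp [P3, h01, h02]
  · by_cases hj1 : j = i1
    · subst hj1; simp [P3, hj0, Ne.symm h01, h12]
    · by_cases hj2 : j = i2
      · subst hj2; simp [P3, hj0, hj1, Ne.symm h02, Ne.symm h12]
      · simp [P3, hj0, hj1, hj2]

include h01 h02 h12 in
lemma mem_lineSet_P3 {X Y Z X' Y' Z' : F} {p : Fin m → F} :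
    p ∈ lineSet F (P3 i0 i1 i2 X Y Z) (P3 i0 i1 i2 X' Y' Z') ↔
      ∃ t : F, P3 i0 i1 i2 (X + t * X') (Y + t * Y') (Z + t * Z') = p := by
  rw [mem_lineSet]
  constructor
  · rintro ⟨t, rfl⟩; exact ⟨t, (P3_add_smul h01 h02 h12 _ _ _ _ _ _ _).symm⟩
  · rintro ⟨t, rfl⟩; exact ⟨t, P3_add_smul h01 h02 h12 _ _ _ _ _ _ _⟩

include h01 h02 h12 in
lemma P3_eq_zero_iff {X Y Z : F} : P3 i0 i1 i2 X Y Z = 0 ↔ X = 0 ∧ Y = 0 ∧ Z = 0 := by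
  constructor
  · intro h
    exact P3_inj h01 h02 h12 (by rw [h]; funext j; simp [P3])
  · rintro ⟨rfl, rfl, rfl⟩; funext j; simp [P3]

include h01 h02 h12 in
/-- The two-pencil configuration of `2q` lines for odd `q` (needs `m ≥ 3`). -/
lemma odd_config :
    ∃ 𝒮 : Finset (EGLine F m), 𝒮.Nonempty ∧ 𝒮.card = 2 * Fintype.card F ∧
      ∀ p : Fin m → F, Even ((𝒮.filter (fun ℓ => p ∈ ℓ.1)).card) := by
  have hzero : (0 : Fin m → F) = P3 i0 i1 i2 0 0 0 :=
    ((P3_eq_zero_iff h01 h02 h12).2 ⟨rfl, rfl, rfl⟩).symm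
  have hdA : P3 i0 i1 i2 (0:F) 1 0 ≠ 0 :=
    fun h => one_ne_zero ((P3_eq_zero_iff h01 h02 h12).1 h).2.1
  have hdB : P3 i0 i1 i2 (1:F) 0 0 ≠ 0 :=
    fun h => one_ne_zero ((P3_eq_zero_iff h01 h02 h12).1 h).1
  have hAmem : ∀ c X Y Z : F, P3 i0 i1 i2 X Y Z ∈
      lineSet F (P3 i0 i1 i2 c 0 1) (P3 i0 i1 i2 0 1 0) ↔ X = c ∧ Z = 1 := by
    intro c X Y Z
    rw [mem_lineSet_P3 h01 h02 h12]
    constructor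
    · rintro ⟨t, ht⟩
      obtain ⟨e1, e2, e3⟩ := P3_inj h01 h02 h12 ht
      exact ⟨by rw [← e1]; ring, by rw [← e3]; ring⟩
    · rintro ⟨rfl, rfl⟩
      exact ⟨Y, by rw [show X + Y*0 = X by ring, show (0:F) + Y*1 = Y by ring,
        show (1:F) + Y*0 = 1 by ring]⟩
  have hBmem : ∀ c X Y Z : F, P3 i0 i1 i2 X Y Z ∈
      lineSet F (P3 i0 i1 i2 0 c 1) (P3 i0 i1 i2 1 0 0) ↔ Y = c ∧ Z = 1 := by
    intro c X Y Z
    rw [mem_lineSet_P3 h01 h02 h12]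
    constructor
    · rintro ⟨t, ht⟩
      obtain ⟨e1, e2, e3⟩ := P3_inj h01 h02 h12 ht
      exact ⟨by rw [← e2]; ring, by rw [← e3]; ring⟩
    · rintro ⟨rfl, rfl⟩
      exact ⟨X, by rw [show (0:F) + X*1 = X by ring, show Y + X*0 = Y by ring,
        show (1:F) + X*0 = 1 by ring]⟩
  have hA0 : ∀ c : F, (0 : Fin m → F) ∉ lineSet F (P3 i0 i1 i2 c 0 1) (P3 i0 i1 i2 0 1 0) := by
    intro c h
    rw [hzero, hAmem] at h
    exact one_ne_zero h.2.symm
  have hB0 : ∀ c : F, (0 : Fin m → F) ∉ lineSet F (P3 i0 i1 i2 0 c 1) (P3 i0 i1 i2 1 0 0) := by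
    intro c h
    rw [hzero, hBmem] at h
    exact one_ne_zero h.2.symm
  set AE : F → EGLine F m := fun c => eglineMk _ _ hdA (hA0 c) with hAE
  set BE : F → EGLine F m := fun c => eglineMk _ _ hdB (hB0 c) with hBE
  have hAEc : ∀ c, (AE c).1 = lineSet F (P3 i0 i1 i2 c 0 1) (P3 i0 i1 i2 0 1 0) := fun _ => rfl
  have hBEc : ∀ c, (BE c).1 = lineSet F (P3 i0 i1 i2 0 c 1) (P3 i0 i1 i2 1 0 0) := fun _ => rfl
  have hAbase : ∀ c : F, P3 i0 i1 i2 c 0 1 ∈ (AE c).1 := fun c => base_mem_lineSet _ _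
  have hBbase : ∀ c : F, P3 i0 i1 i2 0 c 1 ∈ (BE c).1 := fun c => base_mem_lineSet _ _
  have hAinj : Function.Injective AE := by
    intro c c' h
    have hb : P3 i0 i1 i2 c (0:F) 1 ∈ (AE c').1 := by rw [← h]; exact hAbase c
    rw [hAEc, hAmem] at hb
    exact hb.1
  have hBinj : Function.Injective BE := by
    intro c c' h
    have hb : P3 i0 i1 i2 (0:F) c 1 ∈ (BE c').1 := by rw [← h]; exact hBbase c
    rw [hBEc, hBmem] at hb
    exact hb.1
  have hAB : ∀ c c' : F, AE c ≠ BE c' := by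
    intro c c' h
    have hb : P3 i0 i1 i2 c ((c' + 1):F) 1 ∈ (AE c).1 := by
      rw [hAEc, hAmem]; exact ⟨rfl, rfl⟩
    rw [h, hBEc, hBmem] at hb
    have := hb.1
    simpa using this
  refine ⟨Finset.image AE Finset.univ ∪ Finset.image BE Finset.univ, ?_, ?_, ?_⟩
  · exact ⟨AE 0, Finset.mem_union_left _ (Finset.mem_image.2 ⟨0, Finset.mem_univ _, rfl⟩)⟩
  · rw [Finset.card_union_of_disjoint, Finset.card_image_of_injective _ hAinj,
      Finset.card_image_of_injective _ hBinj, Finset.card_univ, two_mul]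
    rw [Finset.disjoint_left]
    rintro ℓ hℓ hℓ'
    obtain ⟨ca, -, rfl⟩ := Finset.mem_image.1 hℓ
    obtain ⟨cb, -, hcb⟩ := Finset.mem_image.1 hℓ'
    exact hAB ca cb hcb.symm
  · intro p
    by_cases hout : ∃ j : Fin m, j ≠ i0 ∧ j ≠ i1 ∧ j ≠ i2 ∧ p j ≠ 0
    · obtain ⟨j, hj0, hj1, hj2, hj⟩ := hout
      have hshape : ∀ ℓ ∈ Finset.image AE Finset.univ ∪ Finset.image BE Finset.univ,
          p ∉ ℓ.1 := by
        intro ℓ hℓ hp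
        have hpshape : ∃ X Y Z t X' Y' Z', P3 i0 i1 i2 (X + t*X') (Y + t*Y') (Z + t*Z') = p := by
          rcases Finset.mem_union.1 hℓ with hℓ' | hℓ'
          · obtain ⟨ca, -, rfl⟩ := Finset.mem_image.1 hℓ'
            rw [hAEc, mem_lineSet_P3 h01 h02 h12] at hp
            obtain ⟨t, ht⟩ := hp
            exact ⟨_, _, _, t, _, _, _, ht⟩
          · obtain ⟨cb, -, rfl⟩ := Finset.mem_image.1 hℓ'
            rw [hBEc, mem_lineSet_P3 h01 h02 h12] at hp
            obtain ⟨t, ht⟩ := hp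
            exact ⟨_, _, _, t, _, _, _, ht⟩
        obtain ⟨X, Y, Z, t, X', Y', Z', ht⟩ := hpshape
        rw [← ht] at hj
        exact hj (P3_other _ _ _ hj0 hj1 hj2)
      rw [Finset.filter_false_of_mem hshape]
      simp
    · push_neg at hout
      have hP : p = P3 i0 i1 i2 (p i0) (p i1) (p i2) := by
        funext j
        by_cases hj0 : j = i0
        · subst hj0; exact ((P3_eval h01 h02 h12 _ _ _).1).symm
        · by_cases hj1 : j = i1
          · subst hj1; exact ((P3_eval h01 h02 h12 _ _ _).2.1).symm
          · by_cases hj2 : j = i2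
            · subst hj2; exact ((P3_eval h01 h02 h12 _ _ _).2.2).symm
            · rw [P3_other _ _ _ hj0 hj1 hj2]; exact hout j hj0 hj1 hj2
      set X := p i0
      set Y := p i1
      set Z := p i2
      by_cases hZ : Z = 1
      · have hfil : (Finset.image AE Finset.univ ∪ Finset.image BE Finset.univ).filter
            (fun ℓ => p ∈ ℓ.1) = {AE X, BE Y} := by
          ext ℓ
          simp only [Finset.mem_filter, Finset.mem_union, Finset.mem_image, Finset.mem_univ,
            true_and, Finset.mem_insert, Finset.mem_singleton]
          constructor
          · rintro ⟨⟨c, rfl⟩ | ⟨c, rfl⟩, hp⟩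
            · rw [hP, hAEc, hAmem] at hp
              exact Or.inl (congrArg AE hp.1.symm)
            · rw [hP, hBEc, hBmem] at hp
              exact Or.inr (congrArg BE hp.1.symm)
          · rintro (rfl | rfl)
            · exact ⟨Or.inl ⟨X, rfl⟩, by rw [hP, hAEc, hAmem]; exact ⟨rfl, hZ⟩⟩
            · exact ⟨Or.inr ⟨Y, rfl⟩, by rw [hP, hBEc, hBmem]; exact ⟨rfl, hZ⟩⟩
        rw [hfil, Finset.card_insert_of_notMem (by simpa using hAB X Y),
          Finset.card_singleton]
        exact ⟨1, rfl⟩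
      · have hfil : (Finset.image AE Finset.univ ∪ Finset.image BE Finset.univ).filter
            (fun ℓ => p ∈ ℓ.1) = ∅ := by
          apply Finset.filter_false_of_mem
          intro ℓ hℓ hp
          rcases Finset.mem_union.1 hℓ with hℓ' | hℓ'
          · obtain ⟨c, -, rfl⟩ := Finset.mem_image.1 hℓ'
            rw [hP, hAEc, hAmem] at hp
            exact hZ hp.2
          · obtain ⟨c, -, rfl⟩ := Finset.mem_image.1 hℓ'
            rw [hP, hBEc, hBmem] at hp
            exact hZ hp.2
        rw [hfil]
        simp

end OddCons

section Planar
variable {F : Type} [Field F] [Fintype F]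

omit [Fintype F] in
/-- If the determinant vanishes, two vectors of `F²` are proportional. -/
lemma prop_of_det0 {d e : F × F} (hd : d ≠ 0) (h : d.1 * e.2 - d.2 * e.1 = 0) :
    ∃ k : F, e = k • d := by
  by_cases h1 : d.1 = 0
  · have h2 : d.2 ≠ 0 := by
      intro h2; exact hd (Prod.ext h1 h2)
    have he1 : e.1 = 0 := by
      have h3 : d.2 * e.1 = 0 := by linear_combination -h + e.2 * h1
      rcases mul_eq_zero.1 h3 with h' | h'
      · exact absurd h' h2
      · exact h'
    refine ⟨e.2 / d.2, Prod.ext ?_ ?_⟩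
    · simp only [Prod.smul_fst, smul_eq_mul, h1, mul_zero]
      exact he1
    · simp only [Prod.smul_snd, smul_eq_mul]
      rw [div_mul_cancel₀ _ h2]
  · refine ⟨e.1 / d.1, Prod.ext ?_ ?_⟩
    · simp only [Prod.smul_fst, smul_eq_mul]
      rw [div_mul_cancel₀ _ h1]
    · simp only [Prod.smul_snd, smul_eq_mul]
      field_simp
      linear_combination h

omit [Fintype F] in
lemma solve2 {d e : F × F} (hd : d ≠ 0) (hnp : ¬ ∃ k : F, e = k • d) (c : F × F) :
    ∃ s t : F, s • d + t • e = c := by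
  have hdet : d.1 * e.2 - d.2 * e.1 ≠ 0 := fun h => hnp (prop_of_det0 hd h)
  set D := d.1 * e.2 - d.2 * e.1 with hD
  refine ⟨(c.1 * e.2 - c.2 * e.1) / D, (d.1 * c.2 - d.2 * c.1) / D, Prod.ext ?_ ?_⟩
  · simp only [Prod.fst_add, Prod.smul_fst, smul_eq_mul]
    field_simp
    ring
  · simp only [Prod.snd_add, Prod.smul_snd, smul_eq_mul]
    field_simp
    ring

omit [Fintype F] in
lemma meet_of_nonpar {d e : F × F} (hd : d ≠ 0) (hnp : ¬ ∃ k : F, e = k • d) (c c' : F × F) :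
    ∃ z : F × F, z ∈ lineSet F c d ∧ z ∈ lineSet F c' e := by
  obtain ⟨s, t, hst⟩ := solve2 hd hnp (c' - c)
  refine ⟨c + s • d, ⟨s, rfl⟩, ⟨-t, ?_⟩⟩
  show c' + (-t) • e = c + s • d
  have hc' : c' = s • d + t • e + c := by
    rw [hst]; abel
  rw [hc', neg_smul]
  abel

omit [Fintype F] in
lemma par_eq_of_inter {c c' d : F × F} {z : F × F}
    (h1 : z ∈ lineSet F c d) (h2 : z ∈ lineSet F c' d) :
    lineSet F c d = lineSet F c' d := by
  rw [← lineSet_rebase h1, ← lineSet_rebase h2]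

lemma inter_card_par {c c' d : F × F} (h : lineSet F c d ≠ lineSet F c' d) :
    (lineSet F c d ∩ lineSet F c' d).toFinset.card = 0 := by
  rw [Finset.card_eq_zero, ← Set.toFinset_empty]
  apply Set.toFinset_congr
  rw [Set.eq_empty_iff_forall_notMem]
  rintro z ⟨hz1, hz2⟩
  exact h (par_eq_of_inter hz1 hz2)

lemma inter_card_nonpar {c c' d e : F × F} (hd : d ≠ 0) (he : e ≠ 0)
    (hnp : ¬ ∃ k : F, e = k • d) :
    (lineSet F c d ∩ lineSet F c' e).toFinset.card = 1 := by
  obtain ⟨z, hz1, hz2⟩ := meet_of_nonpar hd hnp c c'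
  rw [Finset.card_eq_one]
  refine ⟨z, ?_⟩
  ext w
  simp only [Set.mem_toFinset, Set.mem_inter_iff, Finset.mem_singleton]
  constructor
  · rintro ⟨hw1, hw2⟩
    by_contra hwz
    have := lineSet_unique hd he hw1 hz1 hw2 hz2 hwz
    obtain ⟨k, hk, hke⟩ := lineSet_dir hd he this
    exact hnp ⟨k, hke⟩
  · rintro rfl
    exact ⟨hz1, hz2⟩

/-- Whether a line-set has direction `d`. -/
def IsPar (d : F × F) (L : Set (F × F)) : Prop := ∃ c : F × F, L = lineSet F c d

/-- The double counting identity for a line `x` against a family `T`. -/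
lemma sum_deg_eq (T : Finset (Set (F × F))) (c d : F × F) :
    ∑ z ∈ (lineSet F c d).toFinset, (T.filter (fun L => z ∈ L)).card
      = ∑ L ∈ T, ((lineSet F c d ∩ L).toFinset.card) := by
  have h1 : ∀ z, (T.filter (fun L => z ∈ L)).card = ∑ L ∈ T, (if z ∈ L then 1 else 0) := by
    intro z
    rw [Finset.card_filter]
  have h2 : ∀ L, ((lineSet F c d ∩ L).toFinset.card)
      = ∑ z ∈ (lineSet F c d).toFinset, (if z ∈ L then 1 else 0) := by
    intro L
    rw [← Finset.card_filter]
    congr 1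
    ext w
    simp [Set.mem_toFinset]
  simp_rw [h1, h2]
  exact Finset.sum_comm

lemma key_count (T : Finset (Set (F × F)))
    (hl : ∀ L ∈ T, ∃ c d : F × F, d ≠ 0 ∧ L = lineSet F c d)
    (c d : F × F) (hd : d ≠ 0) :
    ∑ z ∈ (lineSet F c d).toFinset, (T.filter (fun L => z ∈ L)).card
      = (if lineSet F c d ∈ T then Fintype.card F else 0)
        + (T.filter (fun L => ¬ IsPar d L)).card := by
  rw [sum_deg_eq]
  rw [← Finset.sum_filter_add_sum_filter_not T (fun L => IsPar d L)]
  congr 1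
  · -- parallel part
    by_cases hx : lineSet F c d ∈ T
    · rw [if_pos hx]
      have hxmem : lineSet F c d ∈ T.filter (fun L => IsPar d L) :=
        Finset.mem_filter.2 ⟨hx, ⟨c, rfl⟩⟩
      rw [Finset.sum_eq_single_of_mem _ hxmem]
      · rw [Set.toFinset_congr (Set.inter_self _), lineSet_card hd]
      · intro L hL hLne
        obtain ⟨-, cc, rfl⟩ := Finset.mem_filter.1 hL
        exact inter_card_par (Ne.symm hLne)
    · rw [if_neg hx]
      apply Finset.sum_eq_zero
      intro L hL
      obtain ⟨hLT, cc, rfl⟩ := Finset.mem_filter.1 hL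
      apply inter_card_par
      intro h
      exact hx (h ▸ hLT)
  · -- non-parallel part: each contributes 1
    rw [Finset.sum_congr rfl (fun L hL => ?_), Finset.sum_const, smul_eq_mul, mul_one]
    obtain ⟨hLT, hLnp⟩ := Finset.mem_filter.1 hL
    obtain ⟨cL, dL, hdL, rfl⟩ := hl L hLT
    apply inter_card_nonpar hd hdL
    rintro ⟨k, rfl⟩
    have hk : k ≠ 0 := by
      rintro rfl
      rw [zero_smul] at hdL
      exact hdL rfl
    exact hLnp ⟨cL, by rw [lineSet_smul hk]⟩

/-- The planar theorem: a nonempty even configuration of lines in the affine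
plane over `F`, `|F|` odd, has at least `2|F|` lines. -/
theorem planar_thm (hq : Odd (Fintype.card F)) (T : Finset (Set (F × F)))
    (hl : ∀ L ∈ T, ∃ c d : F × F, d ≠ 0 ∧ L = lineSet F c d)
    (hdeg : ∀ z : F × F, Even ((T.filter (fun L => z ∈ L)).card))
    (hne : T.Nonempty) : 2 * Fintype.card F ≤ T.card := by
  have heven_sum : ∀ c d : F × F,
      Even (∑ z ∈ (lineSet F c d).toFinset, (T.filter (fun L => z ∈ L)).card) := by
    intro c d
    rw [Nat.even_iff, Finset.sum_nat_mod]
    have h3 : ∀ z ∈ (lineSet F c d).toFinset, (T.filter (fun L => z ∈ L)).card % 2 = 0 := by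
      intro z _
      exact Nat.even_iff.1 (hdeg z)
    rw [Finset.sum_congr rfl h3]
    simp
  -- parallel closure
  have hclosed : ∀ c d : F × F, d ≠ 0 → lineSet F c d ∈ T → ∀ c' : F × F,
      lineSet F c' d ∈ T := by
    intro c d hd hmem c'
    by_contra hnot
    have h1 := key_count T hl c d hd
    have h2 := key_count T hl c' d hd
    rw [if_pos hmem] at h1
    rw [if_neg hnot, zero_add] at h2
    have e1 := heven_sum c d
    have e2 := heven_sum c' d
    rw [h1] at e1
    rw [h2] at e2
    have : Even (Fintype.card F) := by
      rcases e1 with ⟨k, hk⟩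
      rcases e2 with ⟨k', hk'⟩
      exact ⟨k - k', by omega⟩
    exact (Nat.not_even_iff_odd.2 hq) this
  -- pick a line of T
  obtain ⟨L0, hL0⟩ := hne
  obtain ⟨c0, d0, hd0, rfl⟩ := hl L0 hL0
  -- a transversal direction to any nonzero d
  have hpick : ∀ d : F × F, d ≠ 0 → ∃ n : F × F, ¬ ∃ k : F, n = k • d := by
    intro d hd
    by_cases h1 : d.1 = 0
    · refine ⟨(1, 0), ?_⟩
      rintro ⟨k, hk⟩
      have h5 := congrArg Prod.fst hk
      simp only [Prod.smul_fst, smul_eq_mul] at h5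
      rw [h1, mul_zero] at h5
      exact one_ne_zero h5
    · refine ⟨(0, 1), ?_⟩
      rintro ⟨k, hk⟩
      have h5 := congrArg Prod.fst hk
      have h6 := congrArg Prod.snd hk
      simp only [Prod.smul_fst, Prod.smul_snd, smul_eq_mul] at h5 h6
      have hk0 : k = 0 := by
        rcases mul_eq_zero.1 h5.symm with h' | h'
        · exact h'
        · exact absurd h' h1
      rw [hk0, zero_mul] at h6
      exact one_ne_zero h6
  -- the family of translates of a line in T, all in T
  have hfam : ∀ c d : F × F, d ≠ 0 → lineSet F c d ∈ T →
      ∃ f : F → Set (F × F), (∀ j, f j ∈ T) ∧ (∀ j, IsPar d (f j)) ∧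
        Function.Injective f ∧ (∀ z : F × F, ∃ j, z ∈ f j) := by
    intro c d hd hmem
    obtain ⟨n, hn⟩ := hpick d hd
    have hdisj : ∀ j j' : F, j ≠ j' → ∀ z, z ∈ lineSet F (c + j • n) d →
        z ∈ lineSet F (c + j' • n) d → False := by
      intro j j' hjj z hz1 hz2
      obtain ⟨t, ht⟩ := hz1
      obtain ⟨t', ht'⟩ := hz2
      have h7 : c + (j • n + t • d) = c + (j' • n + t' • d) := by
        have h8 : c + j • n + t • d = c + j' • n + t' • d := ht.trans ht'.symm
        rw [← add_assoc, ← add_assoc]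
        exact h8
      have h7' : j • n + t • d = j' • n + t' • d := add_left_cancel h7
      have hsub : (j - j') • n = (t' - t) • d := by
        rw [sub_smul, sub_smul]
        apply sub_eq_sub_iff_add_eq_add.2
        rw [h7']
        abel
      have hj : j - j' ≠ 0 := sub_ne_zero.2 hjj
      apply hn
      refine ⟨(j - j')⁻¹ * (t' - t), ?_⟩
      have h10 := congrArg (fun w => (j - j')⁻¹ • w) hsub
      simp only [smul_smul, inv_mul_cancel₀ hj, one_smul] at h10
      rw [h10, mul_smul]
    refine ⟨fun j => lineSet F (c + j • n) d, fun j => hclosed c d hd hmem _,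
      fun j => ⟨c + j • n, rfl⟩, ?_, ?_⟩
    · intro j j' h
      by_contra hjj
      have h' : lineSet F (c + j • n) d = lineSet F (c + j' • n) d := h
      have hz : c + j • n ∈ lineSet F (c + j • n) d := base_mem_lineSet _ _
      have hz' : c + j • n ∈ lineSet F (c + j' • n) d := h' ▸ hz
      exact hdisj j j' hjj _ hz hz'
    · intro z
      obtain ⟨s, t, hst⟩ := solve2 hd hn (z - c)
      refine ⟨t, s, ?_⟩
      show c + t • n + s • d = z
      have h11 : s • d + t • n + c = z := by
        rw [hst]; abel
      rw [← h11]; abel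
  obtain ⟨f, hfT, hfpar, hfinj, hfcov⟩ := hfam c0 d0 hd0 hL0
  -- a second, non-parallel line through a point
  obtain ⟨j0, hj0⟩ := hfcov c0
  have hpenc : f j0 ∈ T.filter (fun L => c0 ∈ L) := Finset.mem_filter.2 ⟨hfT j0, hj0⟩
  have h1lt : 1 < (T.filter (fun L => c0 ∈ L)).card := by
    rcases hdeg c0 with ⟨k, hk⟩
    have : 0 < (T.filter (fun L => c0 ∈ L)).card := Finset.card_pos.2 ⟨f j0, hpenc⟩
    omega
  obtain ⟨L', hL'P, hL'ne⟩ := Finset.exists_mem_ne h1lt (f j0)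
  obtain ⟨hL'T, hc0L'⟩ := Finset.mem_filter.1 hL'P
  obtain ⟨c1, d1, hd1, rfl⟩ := hl L' hL'T
  have hnp10 : ¬ ∃ k : F, d1 = k • d0 := by
    rintro ⟨k, rfl⟩
    have hk : k ≠ 0 := by
      rintro rfl
      rw [zero_smul] at hd1
      exact hd1 rfl
    apply hL'ne
    obtain ⟨cc, hcc⟩ := hfpar j0
    rw [hcc]
    rw [lineSet_smul hk]
    have hh1 : c0 ∈ lineSet F c1 d0 := by rw [← lineSet_smul hk]; exact hc0L'
    have hh2 : c0 ∈ lineSet F cc d0 := by rw [← hcc]; exact hj0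
    exact par_eq_of_inter hh1 hh2
  obtain ⟨g, hgT, hgpar, hginj, -⟩ := hfam c1 d1 hd1 hL'T
  -- the two families are disjoint
  have hdisjfg : Disjoint (Finset.image f Finset.univ) (Finset.image g Finset.univ) := by
    rw [Finset.disjoint_left]
    rintro y hy hy'
    obtain ⟨j, -, rfl⟩ := Finset.mem_image.1 hy
    obtain ⟨k, -, hgk⟩ := Finset.mem_image.1 hy'
    obtain ⟨a, ha⟩ := hfpar j
    obtain ⟨b, hb⟩ := hgpar k
    have hb2 : lineSet F a d0 = lineSet F b d1 := by rw [← ha, ← hgk]; exact hb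
    obtain ⟨κ, hκ, hκe⟩ := lineSet_dir hd0 hd1 hb2
    exact hnp10 ⟨κ, hκe⟩
  have hsub : Finset.image f Finset.univ ∪ Finset.image g Finset.univ ⊆ T := by
    intro y hy
    rcases Finset.mem_union.1 hy with hy' | hy'
    · obtain ⟨j, -, rfl⟩ := Finset.mem_image.1 hy'
      exact hfT j
    · obtain ⟨k, -, rfl⟩ := Finset.mem_image.1 hy'
      exact hgT k
  calc 2 * Fintype.card F
      = (Finset.image f Finset.univ).card + (Finset.image g Finset.univ).card := by
        rw [Finset.card_image_of_injective _ hfinj, Finset.card_image_of_injective _ hginj,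
          Finset.card_univ, two_mul]
    _ = (Finset.image f Finset.univ ∪ Finset.image g Finset.univ).card := 
        (Finset.card_union_of_disjoint hdisjfg).symm
    _ ≤ T.card := Finset.card_le_card hsub

end Planar

section LB2
variable {F : Type} [Field F] [Fintype F] {m : ℕ}

/-- Two lines sharing two distinct points are equal. -/
lemma egline_eq_of_two_points {ℓ ℓ' : EGLine F m} {r r' : Fin m → F}
    (hr : r ∈ ℓ.1) (hr' : r' ∈ ℓ.1) (hs : r ∈ ℓ'.1) (hs' : r' ∈ ℓ'.1) (hne : r ≠ r') :
    ℓ = ℓ' := by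
  obtain ⟨c, d, hd, he⟩ := egline_repr ℓ
  obtain ⟨c', d', hd', he'⟩ := egline_repr ℓ'
  apply Subtype.ext
  rw [he, he']
  exact lineSet_unique hd hd' (he ▸ hr) (he ▸ hr') (he' ▸ hs) (he' ▸ hs') hne

theorem lb2 (hq : Odd (Fintype.card F)) (S : Finset (EGLine F m)) (hne : S.Nonempty)
    (hdeg : ∀ p : Fin m → F, Even ((S.filter (fun ℓ => p ∈ ℓ.1)).card)) :
    2 * Fintype.card F ≤ S.card := by
  set q := Fintype.card F with hqdef
  by_contra hlt
  push_neg at hlt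
  have hq2 : 2 ≤ q := Fintype.one_lt_card
  -- two lines through a point
  obtain ⟨ℓ0, hℓ0⟩ := hne
  obtain ⟨a0, b0, hb0, heq0⟩ := egline_repr ℓ0
  have ha0 : a0 ∈ ℓ0.1 := heq0 ▸ base_mem_lineSet a0 b0
  obtain ⟨ℓ1, hℓ1S, hℓ1ne, ha1⟩ := partner_exists S hdeg hℓ0 ha0
  obtain ⟨a1, b1, hb1, heq1raw⟩ := egline_repr ℓ1
  have heq1 : ℓ1.1 = lineSet F a0 b1 := by
    rw [heq1raw]
    exact (lineSet_rebase (heq1raw ▸ ha1)).symm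
  -- independence of the two directions
  have hind : ∀ k : F, b1 ≠ k • b0 := by
    rintro k rfl
    have hk : k ≠ 0 := by
      rintro rfl
      rw [zero_smul] at hb1
      exact hb1 rfl
    apply hℓ1ne
    apply Subtype.ext
    rw [heq1, heq0, lineSet_smul hk]
  -- the plane through ℓ0 and ℓ1
  set Pl : Set (Fin m → F) := {v | ∃ s t : F, v = a0 + s • b0 + t • b1} with hPl
  have hplane_line : ∀ (ℓ : EGLine F m) (r r' : Fin m → F), r ∈ ℓ.1 → r' ∈ ℓ.1 →
      r ≠ r' → r ∈ Pl → r' ∈ Pl → ℓ.1 ⊆ Pl := by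
    intro ℓ r r' hr hr' hrr hrP hr'P
    obtain ⟨c, d, hd, he⟩ := egline_repr ℓ
    have hline : ℓ.1 = lineSet F r (r' - r) := by
      rw [he]
      exact lineSet_two_point hd (he ▸ hr) (he ▸ hr') hrr
    rw [hline]
    obtain ⟨s1, t1, rfl⟩ := hrP
    obtain ⟨s2, t2, rfl⟩ := hr'P
    rintro v ⟨t, rfl⟩
    exact ⟨s1 + t * (s2 - s1), t1 + t * (t2 - t1), by module⟩
  set SP := S.filter (fun ℓ => ℓ.1 ⊆ Pl) with hSP
  set EXT := S.filter (fun ℓ => ¬ ℓ.1 ⊆ Pl) with hEXT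
  have hsplit : SP.card + EXT.card = S.card := by
    rw [hSP, hEXT]
    exact Finset.card_filter_add_card_filter_not _
  set u := SP.card with hu
  have hℓ0sub : ℓ0.1 ⊆ Pl := by
    rw [heq0]
    rintro v ⟨t, rfl⟩
    exact ⟨t, 0, by module⟩
  have hℓ1sub : ℓ1.1 ⊆ Pl := by
    rw [heq1]
    rintro v ⟨t, rfl⟩
    exact ⟨0, t, by module⟩
  have hℓ0P : ℓ0 ∈ SP := Finset.mem_filter.2 ⟨hℓ0, hℓ0sub⟩
  have hℓ1P : ℓ1 ∈ SP := Finset.mem_filter.2 ⟨hℓ1S, hℓ1sub⟩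
  have hu2 : 2 ≤ u := by
    rw [hu]
    refine Finset.one_lt_card.2 ⟨ℓ1, hℓ1P, ℓ0, hℓ0P, hℓ1ne⟩
  -- Step A: an external line forces at least q external lines
  have hext : ∀ y ∈ S, ¬ (y.1 ⊆ Pl) → q ≤ EXT.card := by
    intro y hyS hyext
    obtain ⟨c, d, hd, heqy⟩ := egline_repr y
    have hyPl : ∀ r r' : Fin m → F, r ∈ y.1 → r' ∈ y.1 → r ∈ Pl → r' ∈ Pl → r = r' := by
      intro r r' hr hr' hrP hr'P
      by_contra hrr
      exact hyext (hplane_line y r r' hr hr' hrr hrP hr'P)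
    have hparam : ∀ t : F, c + t • d ∈ y.1 := by
      intro t; rw [heqy]; exact param_mem_lineSet c d t
    have H : ∀ t : F, ∃ ℓ' ∈ S, ℓ' ≠ y ∧ (c + t • d) ∈ ℓ'.1 :=
      fun t => partner_exists S hdeg hyS (hparam t)
    choose g hg1 hg2 hg3 using H
    have hginj : ∀ t t' : F, g t = g t' → t = t' := by
      intro t t' hgt
      by_contra htt
      have hptne : c + t • d ≠ c + t' • d := fun h => htt (lineSet_inj_param hd h)
      have h1 : c + t • d ∈ (g t).1 := hg3 t
      have h2 : c + t' • d ∈ (g t).1 := hgt ▸ hg3 t'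
      exact hg2 t (egline_eq_of_two_points h1 h2 (hparam t) (hparam t') hptne)
    -- at most one parameter yields an internal partner
    have hone : ∀ t t' : F, (g t).1 ⊆ Pl → (g t').1 ⊆ Pl → t = t' := by
      intro t t' h h'
      have h1 : c + t • d ∈ Pl := h (hg3 t)
      have h2 : c + t' • d ∈ Pl := h' (hg3 t')
      have := hyPl _ _ (hparam t) (hparam t') h1 h2
      exact lineSet_inj_param hd this
    set B := Finset.univ.filter (fun t : F => ¬ (g t).1 ⊆ Pl) with hB
    have hBcard : q - 1 ≤ B.card := by
      have hA : (Finset.univ.filter (fun t : F => (g t).1 ⊆ Pl)).card ≤ 1 := by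
        apply Finset.card_le_one.2
        intro t ht t' ht'
        exact hone t t' (Finset.mem_filter.1 ht).2 (Finset.mem_filter.1 ht').2
      have := Finset.card_filter_add_card_filter_not
        (s := (Finset.univ : Finset F)) (p := fun t : F => (g t).1 ⊆ Pl)
      rw [Finset.card_univ, ← hqdef, ← hB] at this
      omega
    have hmap : ∀ t ∈ B, g t ∈ EXT.erase y := by
      intro t ht
      rw [Finset.mem_erase]
      exact ⟨hg2 t, Finset.mem_filter.2 ⟨hg1 t, (Finset.mem_filter.1 ht).2⟩⟩
    have hcard2 : B.card ≤ (EXT.erase y).card :=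
      Finset.card_le_card_of_injOn g hmap (fun t _ t' _ h => hginj t t' h)
    have hyEXT : y ∈ EXT := Finset.mem_filter.2 ⟨hyS, hyext⟩
    have h0 : 0 < EXT.card := Finset.card_pos.2 ⟨y, hyEXT⟩
    rw [Finset.card_erase_of_mem hyEXT] at hcard2
    omega
  by_cases hule : u ≤ q
  · -- Step B : a plane with 2 ≤ u ≤ q lines forces many external lines
    set idg : (Fin m → F) → ℕ := fun r => (SP.filter (fun z => r ∈ z.1)).card with hidg
    have hD1 : ∀ x ∈ SP, (q + 1 - u) ≤ (x.1.toFinset.filter (fun r => idg r = 1)).card := by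
      intro x hxSP
      obtain ⟨c, d, hd, heqx⟩ := egline_repr x
      have hxS : x ∈ S := (Finset.mem_filter.1 hxSP).1
      have hptscard : x.1.toFinset.card = q := by
        rw [Set.toFinset_congr heqx, lineSet_card hd, ← hqdef]
      have hCC : (x.1.toFinset.filter (fun r => ¬ idg r = 1)).card ≤ u - 1 := by
        have HH : ∀ r : Fin m → F, ∃ z : EGLine F m,
            (r ∈ x.1.toFinset.filter (fun r => ¬ idg r = 1) → z ∈ SP.erase x ∧ r ∈ z.1) := by
          intro r
          by_cases hr : r ∈ x.1.toFinset.filter (fun r => ¬ idg r = 1)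
          · obtain ⟨hrx, hrdeg⟩ := Finset.mem_filter.1 hr
            have hx_in : x ∈ SP.filter (fun z => r ∈ z.1) :=
              Finset.mem_filter.2 ⟨hxSP, Set.mem_toFinset.1 hrx⟩
            have h1lt : 1 < (SP.filter (fun z => r ∈ z.1)).card := by
              have hpos : 0 < (SP.filter (fun z => r ∈ z.1)).card :=
                Finset.card_pos.2 ⟨x, hx_in⟩
              have hne1 : idg r ≠ 1 := hrdeg
              simp only [hidg] at hne1
              omega
            obtain ⟨z, hz, hzne⟩ := Finset.exists_mem_ne h1lt x
            exact ⟨z, fun _ => ⟨Finset.mem_erase.2 ⟨hzne, (Finset.mem_filter.1 hz).1⟩,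
              (Finset.mem_filter.1 hz).2⟩⟩
          · exact ⟨ℓ0, fun h => absurd h hr⟩
        choose zf hzf using HH
        have hcle : (x.1.toFinset.filter (fun r => ¬ idg r = 1)).card ≤ (SP.erase x).card := by
          apply Finset.card_le_card_of_injOn zf (fun r hr => (hzf r hr).1)
          intro r hr r' hr' hzz
          by_contra hrr
          have h1 : r ∈ (zf r).1 := (hzf r hr).2
          have h2 : r' ∈ (zf r).1 := by rw [hzz]; exact (hzf r' hr').2
          have hrx : r ∈ x.1 := Set.mem_toFinset.1 (Finset.mem_filter.1 hr).1
          have hr'x : r' ∈ x.1 := Set.mem_toFinset.1 (Finset.mem_filter.1 hr').1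
          have := egline_eq_of_two_points h1 h2 hrx hr'x hrr
          exact (Finset.mem_erase.1 (hzf r hr).1).1 this
        rw [Finset.card_erase_of_mem hxSP] at hcle
        exact hcle
      have hsplitx : (x.1.toFinset.filter (fun r => idg r = 1)).card
          + (x.1.toFinset.filter (fun r => ¬ idg r = 1)).card = x.1.toFinset.card :=
        Finset.card_filter_add_card_filter_not _
      rw [hptscard] at hsplitx
      omega
    set PB := SP.biUnion (fun x => x.1.toFinset.filter (fun r => idg r = 1)) with hPB
    have hPBcard : u * (q + 1 - u) ≤ PB.card := by
      have hdisjPB : ∀ x ∈ SP, ∀ x' ∈ SP, x ≠ x' →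
          Disjoint (x.1.toFinset.filter (fun r => idg r = 1))
            (x'.1.toFinset.filter (fun r => idg r = 1)) := by
        intro x hx x' hx' hxx
        rw [Finset.disjoint_left]
        intro r hr hr'
        obtain ⟨hrx, hrdeg⟩ := Finset.mem_filter.1 hr
        obtain ⟨hrx', -⟩ := Finset.mem_filter.1 hr'
        have hd1 : (SP.filter (fun z => r ∈ z.1)).card ≤ 1 := le_of_eq hrdeg
        have := Finset.card_le_one.1 hd1 x
          (Finset.mem_filter.2 ⟨hx, Set.mem_toFinset.1 hrx⟩) x'
          (Finset.mem_filter.2 ⟨hx', Set.mem_toFinset.1 hrx'⟩)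
        exact hxx this
      rw [hPB, Finset.card_biUnion hdisjPB]
      have hsum := Finset.sum_le_sum hD1
      rw [Finset.sum_const, smul_eq_mul] at hsum
      exact hsum
    have hPBEXT : PB.card ≤ EXT.card := by
      have HH : ∀ r : Fin m → F, ∃ yx : EGLine F m, (r ∈ PB → yx ∈ EXT ∧ r ∈ yx.1) := by
        intro r
        by_cases hr : r ∈ PB
        · obtain ⟨x, hxSP, hrx⟩ := Finset.mem_biUnion.1 hr
          obtain ⟨hrx1, hrdeg⟩ := Finset.mem_filter.1 hrx
          have hrmem : r ∈ x.1 := Set.mem_toFinset.1 hrx1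
          obtain ⟨y', hy'S, hy'ne, hry'⟩ :=
            partner_exists S hdeg (Finset.mem_filter.1 hxSP).1 hrmem
          have hy'ext : ¬ y'.1 ⊆ Pl := by
            intro hsub
            have hd1 : (SP.filter (fun z => r ∈ z.1)).card ≤ 1 := le_of_eq hrdeg
            have := Finset.card_le_one.1 hd1 y'
              (Finset.mem_filter.2 ⟨Finset.mem_filter.2 ⟨hy'S, hsub⟩, hry'⟩) x
              (Finset.mem_filter.2 ⟨hxSP, hrmem⟩)
            exact hy'ne this
          exact ⟨y', fun _ => ⟨Finset.mem_filter.2 ⟨hy'S, hy'ext⟩, hry'⟩⟩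
        · exact ⟨ℓ0, fun h => absurd h hr⟩
      choose yf hyf using HH
      apply Finset.card_le_card_of_injOn yf (fun r hr => (hyf r hr).1)
      intro r hr r' hr' hyy
      by_contra hrr
      have hrPl : r ∈ Pl := by
        obtain ⟨x, hxSP, hrx⟩ := Finset.mem_biUnion.1 hr
        exact (Finset.mem_filter.1 hxSP).2
          (Set.mem_toFinset.1 (Finset.mem_filter.1 hrx).1)
      have hr'Pl : r' ∈ Pl := by
        obtain ⟨x, hxSP, hrx⟩ := Finset.mem_biUnion.1 hr'
        exact (Finset.mem_filter.1 hxSP).2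
          (Set.mem_toFinset.1 (Finset.mem_filter.1 hrx).1)
      have h1 : r ∈ (yf r).1 := (hyf r hr).2
      have h2 : r' ∈ (yf r).1 := by rw [hyy]; exact (hyf r' hr').2
      have hyext2 : ¬ (yf r).1 ⊆ Pl := (Finset.mem_filter.1 (hyf r hr).1).2
      exact hyext2 (hplane_line (yf r) r r' h1 h2 hrr hrPl hr'Pl)
    have harith : 2 * q ≤ u + u * (q + 1 - u) := by
      obtain ⟨j, hj⟩ : ∃ j, q = u + j := ⟨q - u, by omega⟩
      have h1 : q + 1 - u = j + 1 := by omega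
      have h2 : u * (j + 1) = u * j + u := by ring
      have h3 : 2 * j ≤ u * j := Nat.mul_le_mul_right j hu2
      rw [h1]
      omega
    have hchain : 2 * q ≤ S.card := by
      have hPE : u * (q + 1 - u) ≤ EXT.card := le_trans hPBcard hPBEXT
      omega
    omega
  · -- Step C : more than q coplanar lines force everything into the plane
    push_neg at hule
    have hnoext : ∀ y ∈ S, y.1 ⊆ Pl := by
      intro y hyS
      by_contra hyext
      have := hext y hyS hyext
      omega
    -- transfer to the plane F × F
    set ψ : F × F → (Fin m → F) := fun z => a0 + z.1 • b0 + z.2 • b1 with hψ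
    have hψinj : Function.Injective ψ := by
      intro z z' h
      have h1 : z.1 • b0 + z.2 • b1 = z'.1 • b0 + z'.2 • b1 := by
        have h0 : a0 + (z.1 • b0 + z.2 • b1) = a0 + (z'.1 • b0 + z'.2 • b1) := by
          rw [← add_assoc, ← add_assoc]
          exact h
        exact add_left_cancel h0
      by_cases h22 : z.2 = z'.2
      · have h4 : z.1 • b0 = z'.1 • b0 := by
          rw [h22] at h1
          exact add_right_cancel h1
        have h5 : (z.1 - z'.1) • b0 = 0 := by rw [sub_smul, h4, sub_self]
        rcases smul_eq_zero.1 h5 with h6 | h6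
        · exact Prod.ext (by linear_combination h6) h22
        · exact absurd h6 hb0
      · exfalso
        have h4 : (z.2 - z'.2) • b1 = (z'.1 - z.1) • b0 := by
          rw [sub_smul, sub_smul, sub_eq_sub_iff_add_eq_add]
          rw [add_comm (z.2 • b1) (z.1 • b0)]
          rw [h1]
        have hzz : z.2 - z'.2 ≠ 0 := sub_ne_zero.2 h22
        apply hind ((z.2 - z'.2)⁻¹ * (z'.1 - z.1))
        have h7 := congrArg (fun w => (z.2 - z'.2)⁻¹ • w) h4
        simp only [smul_smul, inv_mul_cancel₀ hzz, one_smul] at h7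
        rw [h7, mul_smul]
    have hpull : ∀ ℓ ∈ S, ∃ α β : F × F, β ≠ 0 ∧ ψ ⁻¹' ℓ.1 = lineSet F α β ∧
        ℓ.1 = ψ '' (ψ ⁻¹' ℓ.1) := by
      intro ℓ hℓS
      obtain ⟨c, d, hd, heqℓ⟩ := egline_repr ℓ
      have hcPl : c ∈ Pl := hnoext ℓ hℓS (heqℓ ▸ base_mem_lineSet c d)
      have hcdPl : c + d ∈ Pl := by
        apply hnoext ℓ hℓS
        rw [heqℓ]
        exact ⟨1, show c + (1:F) • d = c + d by rw [one_smul]⟩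
      obtain ⟨s1, t1, hc1⟩ := hcPl
      obtain ⟨s2, t2, hc2⟩ := hcdPl
      set α : F × F := (s1, t1) with hα
      set γ : F × F := (s2, t2) with hγ
      have hcψ : c = ψ α := hc1
      have hcdψ : c + d = ψ γ := hc2
      set β : F × F := γ - α with hβdef
      have hβ : β ≠ 0 := by
        rw [hβdef, sub_ne_zero]
        intro h
        rw [h] at hcdψ
        rw [← hcψ] at hcdψ
        have : d = 0 := by
          have := congrArg (fun w => w - c) hcdψ
          simpa using this
        exact hd this
      have hψline : ∀ t : F, ψ (α + t • β) = c + t • d := by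
        intro t
        have hdψ : d = ψ γ - ψ α := by
          rw [← hcψ, ← hcdψ]
          abel
        rw [hcψ, hdψ, hψ, hβdef]
        simp only [Prod.fst_add, Prod.snd_add, Prod.smul_fst, Prod.smul_snd,
          Prod.fst_sub, Prod.snd_sub, smul_eq_mul]
        module
      have hset : ℓ.1 = ψ '' lineSet F α β := by
        rw [heqℓ]
        ext v
        constructor
        · rintro ⟨t, rfl⟩
          exact ⟨α + t • β, ⟨t, rfl⟩, hψline t⟩
        · rintro ⟨w, ⟨t, rfl⟩, rfl⟩
          exact ⟨t, (hψline t).symm⟩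
      have hpre : ψ ⁻¹' ℓ.1 = lineSet F α β := by
        rw [hset, Set.preimage_image_eq _ hψinj]
      exact ⟨α, β, hβ, hpre, by rw [hpre, ← hset]⟩
    set T : Finset (Set (F × F)) := S.image (fun ℓ => ψ ⁻¹' ℓ.1) with hT
    have hinjS : ∀ ℓ ∈ S, ∀ ℓ' ∈ S, ψ ⁻¹' ℓ.1 = ψ ⁻¹' ℓ'.1 → ℓ = ℓ' := by
      intro ℓ hℓ ℓ' hℓ' hpp
      obtain ⟨-, -, -, -, him⟩ := hpull ℓ hℓ
      obtain ⟨-, -, -, -, him'⟩ := hpull ℓ' hℓ'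
      apply Subtype.ext
      rw [him, him', hpp]
    have hcardT : T.card = S.card := by
      rw [hT]
      exact Finset.card_image_of_injOn (fun ℓ hℓ ℓ' hℓ' h => hinjS ℓ hℓ ℓ' hℓ' h)
    have hlT : ∀ L ∈ T, ∃ cc dd : F × F, dd ≠ 0 ∧ L = lineSet F cc dd := by
      intro L hL
      obtain ⟨ℓ, hℓS, rfl⟩ := Finset.mem_image.1 hL
      obtain ⟨α, β, hβ, hpre, -⟩ := hpull ℓ hℓS
      exact ⟨α, β, hβ, hpre⟩
    have hdegT : ∀ z : F × F, Even ((T.filter (fun L => z ∈ L)).card) := by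
      intro z
      have hTz : T.filter (fun L => z ∈ L)
          = (S.filter (fun ℓ => ψ z ∈ ℓ.1)).image (fun ℓ => ψ ⁻¹' ℓ.1) := by
        ext L
        simp only [hT, Finset.mem_filter, Finset.mem_image]
        constructor
        · rintro ⟨⟨ℓ, hℓS, rfl⟩, hzL⟩
          exact ⟨ℓ, ⟨hℓS, hzL⟩, rfl⟩
        · rintro ⟨ℓ, ⟨hℓS, hzL⟩, rfl⟩
          exact ⟨⟨ℓ, hℓS, rfl⟩, hzL⟩
      rw [hTz, Finset.card_image_of_injOn (fun ℓ hℓ ℓ' hℓ' h =>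
        hinjS ℓ (Finset.mem_filter.1 hℓ).1 ℓ' (Finset.mem_filter.1 hℓ').1 h)]
      exact hdeg (ψ z)
    have hneT : T.Nonempty := ⟨ψ ⁻¹' ℓ0.1, Finset.mem_image.2 ⟨ℓ0, hℓ0, rfl⟩⟩
    have hfinal := planar_thm (by rw [← hqdef]; exact hq) T hlT hdegT hneT
    rw [hcardT, ← hqdef] at hfinal
    omega

end LB2

section Glue
variable {F : Type} [Field F] [Fintype F] {m : ℕ}

lemma char_two_of_even_card (h : Even (Fintype.card F)) : (2:F) = 0 := by
  have hch : CharP F (ringChar F) := ringChar.charP F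
  obtain ⟨n, hp, hcard⟩ := FiniteField.card F (ringChar F)
  have h2 : (2 : ℕ) ∣ ringChar F := by
    apply Nat.Prime.dvd_of_dvd_pow (p := 2) Nat.prime_two
    rw [← hcard]
    exact even_iff_two_dvd.1 h
  have hpr : ringChar F = 2 := ((Nat.prime_dvd_prime_iff_eq Nat.prime_two hp).1 h2).symm
  have := CharP.cast_eq_zero F (ringChar F)
  rw [hpr] at this
  exact_mod_cast this

lemma exists_nonimage (h2 : (2:F) = 0) : ∃ c : F, ∀ t : F, t*t + t ≠ c := by
  by_contra h
  push_neg at h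
  have hsurj : Function.Surjective (fun t : F => t*t + t) := by
    intro c
    obtain ⟨t, ht⟩ := h c
    exact ⟨t, ht⟩
  have hinj := Finite.injective_iff_surjective.2 hsurj
  have h01 : (fun t : F => t*t + t) 0 = (fun t : F => t*t + t) 1 := by
    show (0:F)*0 + 0 = (1:F)*1 + 1
    linear_combination -h2
  exact one_ne_zero (hinj h01).symm

lemma config_to_mem (𝒮 : Finset (EGLine F m)) (hne : 𝒮.Nonempty)
    (hpar : ∀ p : Fin m → F, Even ((𝒮.filter (fun ℓ => p ∈ ℓ.1)).card)) :
    ∃ x : EGLine F m → ZMod 2,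
      (∀ p : Fin m → F, p ≠ 0 → ∑ᶠ ℓ ∈ {ℓ : EGLine F m | p ∈ ℓ.1}, x ℓ = 0) ∧
      x ≠ 0 ∧ {ℓ | x ℓ ≠ 0}.ncard = 𝒮.card := by
  set x : EGLine F m → ZMod 2 := fun ℓ => if ℓ ∈ 𝒮 then 1 else 0 with hx
  have hscode : Scode x = 𝒮 := by
    ext ℓ
    by_cases hℓ : ℓ ∈ 𝒮 <;> simp [Scode, hx, hℓ]
  refine ⟨x, ?_, ?_, ?_⟩
  · apply (code_iff x).2
    rw [hscode]
    exact hpar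
  · obtain ⟨ℓ, hℓ⟩ := hne
    intro h0
    have := congrFun h0 ℓ
    rw [hx] at this
    simp only [hℓ, if_true] at this
    exact one_ne_zero this
  · rw [scode_supp x, Set.ncard_coe_finset, hscode]

lemma support_nonempty {x : EGLine F m → ZMod 2} (hx : x ≠ 0) : (Scode x).Nonempty := by
  rcases Finset.eq_empty_or_nonempty (Scode x) with he | hne
  · exfalso
    apply hx
    funext ℓ
    have : ℓ ∉ Scode x := he ▸ Finset.notMem_empty ℓ
    simp only [Scode, Finset.mem_filter, Finset.mem_univ, true_and, not_not] at this
    exact this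
  · exact hne

end Glue

/-- the binary linear code whose parity-check matrix is the point-by-line
incidence matrix of `EG₁(m, q)` (points: nonzero vectors of `𝔽_q^m`) has minimum
distance `q + 1` if `q` is even, and `2q` if `q` is odd and `m ≥ 3`. -/
theorem stmt_11 (q m : ℕ) (hm : 2 ≤ m)
    (F : Type) [Field F] [Fintype F] (hF : Fintype.card F = q) :
    (Even q →
      IsLeast {w : ℕ | ∃ x : EGLine F m → ZMod 2,
        (∀ p : Fin m → F, p ≠ 0 → ∑ᶠ ℓ ∈ {ℓ : EGLine F m | p ∈ ℓ.1}, x ℓ = 0) ∧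
        x ≠ 0 ∧ {ℓ | x ℓ ≠ 0}.ncard = w} (q + 1)) ∧
    (Odd q → 3 ≤ m →
      IsLeast {w : ℕ | ∃ x : EGLine F m → ZMod 2,
        (∀ p : Fin m → F, p ≠ 0 → ∑ᶠ ℓ ∈ {ℓ : EGLine F m | p ∈ ℓ.1}, x ℓ = 0) ∧
        x ≠ 0 ∧ {ℓ | x ℓ ≠ 0}.ncard = w} (2 * q)) := by
  subst hF
  constructor
  · intro hqe
    constructor
    · -- membership: weight q+1 codeword
      have h2 : (2:F) = 0 := char_two_of_even_card hqe
      obtain ⟨c, hc⟩ := exists_nonimage h2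
      have hne : (⟨0, by omega⟩ : Fin m) ≠ (⟨1, by omega⟩ : Fin m) := by
        simp [Fin.ext_iff]
      obtain ⟨𝒮, hne𝒮, hcard, hpar⟩ := even_config hne h2 c hc
      obtain ⟨x, hx1, hx2, hx3⟩ := config_to_mem 𝒮 hne𝒮 hpar
      exact ⟨x, hx1, hx2, by rw [hx3, hcard]⟩
    · rintro w ⟨x, hx1, hx2, rfl⟩
      have hpar := (code_iff x).1 hx1
      rw [scode_supp x, Set.ncard_coe_finset]
      exact lb1 (Scode x) (support_nonempty hx2) hpar
  · intro hqo hm3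
    constructor
    · have h01 : (⟨0, by omega⟩ : Fin m) ≠ (⟨1, by omega⟩ : Fin m) := by
        simp [Fin.ext_iff]
      have h02 : (⟨0, by omega⟩ : Fin m) ≠ (⟨2, by omega⟩ : Fin m) := by
        simp [Fin.ext_iff]
      have h12 : (⟨1, by omega⟩ : Fin m) ≠ (⟨2, by omega⟩ : Fin m) := by
        simp [Fin.ext_iff]
      obtain ⟨𝒮, hne𝒮, hcard, hpar⟩ := odd_config (F := F) h01 h02 h12
      obtain ⟨x, hx1, hx2, hx3⟩ := config_to_mem 𝒮 hne𝒮 hpar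
      exact ⟨x, hx1, hx2, by rw [hx3, hcard]⟩
    · rintro w ⟨x, hx1, hx2, rfl⟩
      have hpar := (code_iff x).1 hx1
      rw [scode_supp x, Set.ncard_coe_finset]
      exact lb2 hqo (Scode x) (support_nonempty hx2) hpar
end

section
/- Let H be the point-by-block incidence matrix over 𝔽₂ of a Steiner 2-design S(2,μ,v) (with 2 ≤ μ < v) whose replication number r = (v−1)/(μ−1) is even. Then the rank of H over 𝔽₂ equals v−1 when μ is even, and equals v or v−1 when μ is odd. -/
open scoped Classical

/-- Hamada: if the replication number `r = (v-1)/(μ-1)` of a Steiner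
2-design `S(2, μ, v)` is even, then the 𝔽₂-rank of its point-by-block incidence matrix
`H` equals `v - 1` when `μ` is even, and equals `v` or `v - 1` when `μ` is odd. -/
theorem stmt_14 (μ v r : ℕ) (hμ : 2 ≤ μ)
    (V : Type) [Fintype V] [DecidableEq V] (hv : Fintype.card V = v) (hμv : μ < v)
    (𝓑 : Finset (Finset V))
    (hblocks : ∀ B ∈ 𝓑, B.card = μ)
    (hpairs : ∀ p q : V, p ≠ q → ∃! B, B ∈ 𝓑 ∧ p ∈ B ∧ q ∈ B)
    (hr : r * (μ - 1) = v - 1) (hreven : Even r)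
    (H : Matrix V {B // B ∈ 𝓑} (ZMod 2))
    (hH : ∀ p B, H p B = if p ∈ B.1 then 1 else 0) :
    (Even μ → H.rank = v - 1) ∧
      (Odd μ → H.rank = v ∨ H.rank = v - 1) := by
  have hv3 : 3 ≤ v := by omega
  have hμ1 : 0 < μ - 1 := by omega
  have hVne : Nonempty V := by
    rw [← Fintype.card_pos_iff]; omega
  -- v is odd
  have hvodd : Odd v := by
    obtain ⟨k, hk⟩ := hreven
    have h1 : v - 1 = (k + k) * (μ - 1) := by rw [← hr, hk]
    have h2 : (k + k) * (μ - 1) = 2 * (k * (μ - 1)) := by ring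
    exact ⟨k * (μ - 1), by omega⟩
  -- replication: each point lies in exactly r blocks
  have key : ∀ p : V, (𝓑.filter fun B => p ∈ B).card = r := by
    intro p
    have hcover : (𝓑.filter fun B => p ∈ B).biUnion (fun B => B.erase p)
        = Finset.univ.erase p := by
      ext q
      simp only [Finset.mem_biUnion, Finset.mem_erase, Finset.mem_filter,
        Finset.mem_univ, and_true]
      constructor
      · rintro ⟨B, ⟨hB, hpB⟩, hq, hqB⟩
        exact hq
      · intro hq
        obtain ⟨B, ⟨hB, hpB, hqB⟩, -⟩ := hpairs p q (Ne.symm hq)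
        exact ⟨B, ⟨hB, hpB⟩, hq, hqB⟩
    have hdisj : ∀ B ∈ (𝓑.filter fun B => p ∈ B), ∀ C ∈ (𝓑.filter fun B => p ∈ B),
        B ≠ C → Disjoint (B.erase p) (C.erase p) := by
      intro B hB C hC hne
      rw [Finset.mem_filter] at hB hC
      rw [Finset.disjoint_left]
      intro q hqB hqC
      rw [Finset.mem_erase] at hqB hqC
      obtain ⟨D, -, huniq⟩ := hpairs p q (Ne.symm hqB.1)
      exact hne ((huniq B ⟨hB.1, hB.2, hqB.2⟩).trans (huniq C ⟨hC.1, hC.2, hqC.2⟩).symm)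
    have hcard := congrArg Finset.card hcover
    rw [Finset.card_biUnion hdisj] at hcard
    have hsum : ∀ B ∈ (𝓑.filter fun B => p ∈ B), (B.erase p).card = μ - 1 := by
      intro B hB
      rw [Finset.mem_filter] at hB
      rw [Finset.card_erase_of_mem hB.2, hblocks B hB.1]
    rw [Finset.sum_congr rfl hsum, Finset.sum_const, smul_eq_mul,
      Finset.card_erase_of_mem (Finset.mem_univ p), Finset.card_univ, hv] at hcard
    have : (𝓑.filter fun B => p ∈ B).card * (μ - 1) = r * (μ - 1) := by
      rw [hcard, hr]
    exact Nat.eq_of_mul_eq_mul_right hμ1 this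
  -- the Gram matrix H * Hᵀ
  set M : Matrix V V (ZMod 2) := Matrix.of fun p q => if p = q then 0 else 1 with hMdef
  have hM : H * H.transpose = M := by
    ext p q
    rw [Matrix.mul_apply]
    simp only [Matrix.transpose_apply, hH, hMdef, Matrix.of_apply]
    have h1 : ∀ B : {B // B ∈ 𝓑},
        (if p ∈ B.1 then (1 : ZMod 2) else 0) * (if q ∈ B.1 then 1 else 0)
          = if p ∈ B.1 ∧ q ∈ B.1 then 1 else 0 := by
      intro B; split_ifs with h1 h2 h3 <;> simp_all
    rw [Finset.sum_congr rfl fun B _ => h1 B]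
    have h2 : (∑ B : {B // B ∈ 𝓑}, if p ∈ B.1 ∧ q ∈ B.1 then (1 : ZMod 2) else 0)
        = ∑ B ∈ 𝓑, if p ∈ B ∧ q ∈ B then (1 : ZMod 2) else 0 := by
      rw [← Finset.sum_coe_sort 𝓑 (fun B => if p ∈ B ∧ q ∈ B then (1 : ZMod 2) else 0)]
    rw [h2, Finset.sum_boole]
    by_cases hpq : p = q
    · subst hpq
      simp only [and_self, if_pos rfl]
      have hfe : (𝓑.filter fun B => p ∈ B).card = r := key p
      rw [hfe]
      exact (ZMod.natCast_eq_zero_iff r 2).mpr hreven.two_dvd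
    · rw [if_neg hpq]
      obtain ⟨B₀, hB₀, huniq⟩ := hpairs p q hpq
      have : (𝓑.filter fun B => p ∈ B ∧ q ∈ B) = {B₀} := by
        ext B
        simp only [Finset.mem_filter, Finset.mem_singleton]
        constructor
        · rintro ⟨hB, h⟩; exact huniq B ⟨hB, h⟩
        · rintro rfl; exact ⟨hB₀.1, hB₀.2⟩
      rw [this]; simp
  -- kernel of M is the span of the all-ones vector
  have hmulvec : ∀ x : V → ZMod 2, M.mulVec x = fun p => (∑ q, x q) + x p := by
    intro x
    funext p
    rw [Matrix.mulVec, dotProduct]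
    have : ∀ q : V, M p q * x q = x q + (if q = p then x q else 0) := by
      intro q
      simp only [hMdef, Matrix.of_apply]
      by_cases h : p = q
      · subst h
        rw [if_pos rfl, if_pos rfl, zero_mul]
        exact (CharTwo.add_self_eq_zero (x p)).symm
      · rw [if_neg h, if_neg (Ne.symm h), one_mul, add_zero]
    rw [Finset.sum_congr rfl fun q _ => this q, Finset.sum_add_distrib,
      Finset.sum_ite_eq' Finset.univ p x, if_pos (Finset.mem_univ p)]
  have hvone : ((Fintype.card V : ℕ) : ZMod 2) = 1 := by
    rw [hv]
    obtain ⟨k, hk⟩ := hvodd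
    rw [hk]
    push_cast
    rw [show (2 : ZMod 2) = 0 by decide]
    ring
  have hker : LinearMap.ker M.mulVecLin
      = Submodule.span (ZMod 2) {(fun _ => 1 : V → ZMod 2)} := by
    ext x
    rw [LinearMap.mem_ker, Matrix.mulVecLin_apply, Submodule.mem_span_singleton]
    constructor
    · intro hx
      refine ⟨∑ q, x q, ?_⟩
      funext p
      have := congrFun (hmulvec x ▸ hx) p
      simp only [Pi.zero_apply] at this
      have hxp : x p = ∑ q, x q := by
        have h2 : (∑ q, x q) + x p = 0 := this
        have := CharTwo.add_self_eq_zero (R := ZMod 2)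
        calc x p = (∑ q, x q) + ((∑ q, x q) + x p) := by
              rw [← add_assoc, CharTwo.add_self_eq_zero, zero_add]
          _ = ∑ q, x q := by rw [h2, add_zero]
      simp [Pi.smul_apply, smul_eq_mul, hxp]
    · rintro ⟨c, rfl⟩
      rw [hmulvec]
      funext p
      simp only [Pi.smul_apply, smul_eq_mul, mul_one, Pi.zero_apply]
      rw [Finset.sum_const, Finset.card_univ]
      have : (Fintype.card V) • c = c := by
        rw [nsmul_eq_mul, hvone, one_mul]
      rw [this]
      exact CharTwo.add_self_eq_zero c
  have hrankM : M.rank = v - 1 := by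
    have h1 := LinearMap.finrank_range_add_finrank_ker M.mulVecLin
    have h2 : Module.finrank (ZMod 2) (V → ZMod 2) = v := by
      rw [Module.finrank_fintype_fun_eq_card, hv]
    have h3 : Module.finrank (ZMod 2) (LinearMap.ker M.mulVecLin) = 1 := by
      rw [hker]
      refine finrank_span_singleton ?_
      intro h
      have := congrFun h (Classical.arbitrary V)
      simpa using this
    rw [h2, h3] at h1
    have : Matrix.rank M = Module.finrank (ZMod 2) (LinearMap.range M.mulVecLin) := rfl
    omega
  -- lower bound on rank H
  have hlow : v - 1 ≤ H.rank := by
    have := Matrix.rank_mul_le_left H H.transpose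
    rw [hM, hrankM] at this
    exact this
  have hhigh : H.rank ≤ v := by
    have := Matrix.rank_le_card_height H
    rwa [hv] at this
  constructor
  · intro hμeven
    -- columns sum: all-ones vector is in the kernel of Hᵀ
    have hone : Matrix.mulVecLin H.transpose (fun _ => 1) = 0 := by
      rw [Matrix.mulVecLin_apply]
      funext B
      rw [Matrix.mulVec, dotProduct]
      simp only [Matrix.transpose_apply, hH, mul_one, Pi.zero_apply]
      rw [Finset.sum_ite_mem, Finset.univ_inter, Finset.sum_const, nsmul_eq_mul, mul_one]
      rw [hblocks B.1 B.2]
      exact (ZMod.natCast_eq_zero_iff μ 2).mpr hμeven.two_dvd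
    have h1 := LinearMap.finrank_range_add_finrank_ker (Matrix.mulVecLin H.transpose)
    have h2 : Module.finrank (ZMod 2) (V → ZMod 2) = v := by
      rw [Module.finrank_fintype_fun_eq_card, hv]
    have h3 : 1 ≤ Module.finrank (ZMod 2) (LinearMap.ker (Matrix.mulVecLin H.transpose)) := by
      have hne : (fun _ => (1 : ZMod 2)) ≠ (0 : V → ZMod 2) := by
        intro h
        have := congrFun h (Classical.arbitrary V)
        simpa using this
      have hle : Submodule.span (ZMod 2) {(fun _ => 1 : V → ZMod 2)}
          ≤ LinearMap.ker (Matrix.mulVecLin H.transpose) := by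
        rw [Submodule.span_le, Set.singleton_subset_iff]
        exact hone
      calc 1 = Module.finrank (ZMod 2)
            (Submodule.span (ZMod 2) {(fun _ => 1 : V → ZMod 2)}) :=
          (finrank_span_singleton hne).symm
        _ ≤ _ := Submodule.finrank_mono hle
    have hrt : H.transpose.rank = H.rank := Matrix.rank_transpose H
    have : H.transpose.rank = Module.finrank (ZMod 2)
        (LinearMap.range (Matrix.mulVecLin H.transpose)) := rfl
    omega
  · intro _
    rcases Nat.lt_or_ge H.rank v with h | h
    · right; omega
    · left; omega
end
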